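/- arXiv:1202.6648 — 6 statements merged into one kernel-verified Lean document; each statement's English description precedes it below -/
import Mathlib

section
/- Let {k_{ij}}_{1≤i≤j≤n−1} be integers. There exists an alcove A = w^{-1}A_0 of the affine symmetric group arrangement of type A_{n−1} such that k_{ij} < ⟨α_{ij}, x⟩ < k_{ij} + 1 for all x ∈ A if and only if for every t with i ≤ t < j, k_{it} + k_{t+1,j} ≤ k_{ij} ≤ k_{it} + k_{t+1,j} + 1. -/
/-!
Necessity: `k_{ij} = ⌊x_i - x_{j+1}⌋`, and `⌊a⌋ + ⌊b⌋ ≤ ⌊a + b⌋ ≤ ⌊a⌋ + ⌊b⌋ + 1`.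

Sufficiency: take `x_0 = 0` and `x_{m+1} = -(k_{0m} + c_m)` with `0 < c_m < 1`. Then
`x_{m+1} - x_{j+1} = k_{m+1,j} + d_{mj} + c_j - c_m`, where the carry
`d_{mj} = k_{0j} - k_{0m} - k_{m+1,j}` is `0` or `1` by Shi's inequalities, so the only
requirement is that `c_m < c_j` when `d_{mj} = 0` and `c_j < c_m` when `d_{mj} = 1`. The
carries satisfy `d_{pr} ∈ {d_{pq} + d_{qr} - 1, d_{pq} + d_{qr}}`, which makes this prescribed
comparison a strict order on `{0, …, n - 2}`; ranks in that order give suitable `c_m`.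
Finally subtract the mean of `x` to land in the hyperplane `∑ x_i = 0`.
-/

open Finset

theorem Finset.sum_sub_mean_eq_zero (n : ℕ) (y : ℕ → ℝ) :
    ∑ i ∈ range n, (y i - (∑ j ∈ range n, y j) / n) = 0 := by
  rcases Nat.eq_zero_or_pos n with rfl | hn
  · simp
  · rw [sum_sub_distrib, sum_const, card_range, nsmul_eq_mul, mul_div_cancel₀ _ (by positivity),
      sub_self]

theorem Finset.exists_Ioo_valued_strictMono_of_rel {α : Type*} (s : Finset α)
    (r : α → α → Prop) (irrefl : ∀ a ∈ s, ¬ r a a)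
    (trans : ∀ a ∈ s, ∀ b ∈ s, ∀ c ∈ s, r a b → r b c → r a c) :
    ∃ f : α → ℝ, (∀ a, f a ∈ Set.Ioo 0 1) ∧ ∀ a ∈ s, ∀ b ∈ s, r a b → f a < f b := by
  classical
  let rank : α → ℕ := fun a => #{b ∈ s | r b a}
  refine ⟨fun a => (rank a + 1) / (#s + 2), fun a => ⟨by positivity, ?_⟩, ?_⟩
  · have : rank a ≤ #s := card_filter_le _ _
    rw [div_lt_one (by positivity)]
    exact_mod_cast (by omega : rank a + 1 < #s + 2)
  · intro a ha b hb hab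
    have hlt : rank a < rank b := by
      refine card_lt_card ((ssubset_iff_of_subset ?_).2 ⟨a, ?_, ?_⟩)
      · intro c hc
        simp only [mem_filter] at hc ⊢
        exact ⟨hc.1, trans c hc.1 a ha b hb hc.2 hab⟩
      · exact mem_filter.2 ⟨ha, hab⟩
      · exact fun h => irrefl a ha (mem_filter.1 h).2
    exact div_lt_div_of_pos_right (add_lt_add_left (Nat.cast_lt.2 hlt) 1) (by positivity)

namespace Shi

def ShiInequalities (n : ℕ) (k : ℕ → ℕ → ℤ) : Prop :=
  ∀ i t j, i ≤ t → t < j → j + 2 ≤ n →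
    k i t + k (t + 1) j ≤ k i j ∧ k i j ≤ k i t + k (t + 1) j + 1

def carry (k : ℕ → ℕ → ℤ) (p q : ℕ) : ℤ := k 0 q - k 0 p - k (p + 1) q

/-- The order in which the fractional parts `c_a`, `c_b` of a solution must lie. -/
def FracLt (k : ℕ → ℕ → ℤ) (a b : ℕ) : Prop :=
  (a < b ∧ carry k a b = 0) ∨ (b < a ∧ carry k b a = 1)

section

variable {n : ℕ} {k : ℕ → ℕ → ℤ}

theorem carry_nonneg_and_le_one (hk : ShiInequalities n k) {p q : ℕ} (hpq : p < q)
    (hq : q + 2 ≤ n) : 0 ≤ carry k p q ∧ carry k p q ≤ 1 := by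
  have := hk 0 p q p.zero_le hpq hq
  unfold carry
  omega

theorem carry_add_le_and_le_carry_add (hk : ShiInequalities n k) {p q r : ℕ} (hpq : p < q)
    (hqr : q < r) (hr : r + 2 ≤ n) :
    carry k p q + carry k q r - 1 ≤ carry k p r ∧ carry k p r ≤ carry k p q + carry k q r := by
  have := hk (p + 1) q r hpq hqr hr
  unfold carry
  omega

theorem fracLt_trans (hk : ShiInequalities n k) {a b c : ℕ} (ha : a + 2 ≤ n)
    (hb : b + 2 ≤ n) (hc : c + 2 ≤ n) (hab : FracLt k a b) (hbc : FracLt k b c) :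
    FracLt k a c := by
  have tri : ∀ {p q r}, p < q → q < r → r + 2 ≤ n →
      (0 ≤ carry k p q ∧ carry k p q ≤ 1) ∧ (0 ≤ carry k q r ∧ carry k q r ≤ 1) ∧
      (0 ≤ carry k p r ∧ carry k p r ≤ 1) ∧
      (carry k p q + carry k q r - 1 ≤ carry k p r ∧ carry k p r ≤ carry k p q + carry k q r) :=
    fun hpq hqr hr => ⟨carry_nonneg_and_le_one hk hpq (by omega),
      carry_nonneg_and_le_one hk hqr hr, carry_nonneg_and_le_one hk (hpq.trans hqr) hr,
      carry_add_le_and_le_carry_add hk hpq hqr hr⟩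
  unfold FracLt at *
  rcases hab with ⟨hab, e₁⟩ | ⟨hba, e₁⟩ <;> rcases hbc with ⟨hbc, e₂⟩ | ⟨hcb, e₂⟩
  · have := tri hab hbc hc; omega
  · rcases lt_trichotomy a c with h | rfl | h
    · have := tri h hcb hb; omega
    · omega
    · have := tri h hab hb; omega
  · rcases lt_trichotomy a c with h | rfl | h
    · have := tri hba h hc; omega
    · omega
    · have := tri hbc h ha; omega
  · have := tri hcb hba ha; omega

theorem exists_frac_Ioo_strictMono (hk : ShiInequalities n k) :
    ∃ c : ℕ → ℝ, (∀ a, c a ∈ Set.Ioo 0 1) ∧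
      ∀ a b, a + 2 ≤ n → b + 2 ≤ n → FracLt k a b → c a < c b := by
  have hmem : ∀ {a}, a ∈ range (n - 1) ↔ a + 2 ≤ n := by simp only [mem_range]; omega
  obtain ⟨c, hc, hmono⟩ := (range (n - 1)).exists_Ioo_valued_strictMono_of_rel (FracLt k)
    (fun a _ => by unfold FracLt; omega)
    (fun a ha b hb c hc => fracLt_trans hk (hmem.1 ha) (hmem.1 hb) (hmem.1 hc))
  exact ⟨c, hc, fun a b ha hb => hmono a (hmem.2 ha) b (hmem.2 hb)⟩

def point (k : ℕ → ℕ → ℤ) (c : ℕ → ℝ) : ℕ → ℝ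
  | 0 => 0
  | m + 1 => -(k 0 m + c m)

theorem point_sub_point_mem_Ioo (hk : ShiInequalities n k) {c : ℕ → ℝ}
    (hc : ∀ a, c a ∈ Set.Ioo 0 1)
    (hmono : ∀ a b, a + 2 ≤ n → b + 2 ≤ n → FracLt k a b → c a < c b)
    {i j : ℕ} (hij : i ≤ j) (hj : j + 2 ≤ n) :
    point k c i - point k c (j + 1) ∈ Set.Ioo (k i j : ℝ) (k i j + 1) := by
  obtain ⟨hcj₀, hcj₁⟩ := hc j
  rcases i with _ | m
  · simp only [point]
    constructor <;> linarith
  obtain ⟨hcm₀, hcm₁⟩ := hc m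
  have hmj : m < j := by omega
  have hcarry : (k 0 j : ℝ) = k 0 m + k (m + 1) j + carry k m j := by
    unfold carry; push_cast; ring
  simp only [point]
  rcases (carry_nonneg_and_le_one hk hmj hj).1.eq_or_lt with h | h
  · have := hmono m j (by omega) hj (.inl ⟨hmj, h.symm⟩)
    rw [← h] at hcarry
    push_cast at hcarry
    constructor <;> linarith
  · have h : carry k m j = 1 := by linarith [(carry_nonneg_and_le_one hk hmj hj).2]
    have := hmono j m hj (by omega) (.inr ⟨hmj, h⟩)
    rw [h] at hcarry
    push_cast at hcarry
    constructor <;> linarith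

theorem shiInequalities_of_floor_eq {x : ℕ → ℝ}
    (hx : ∀ i j, i ≤ j → j + 2 ≤ n → ⌊x i - x (j + 1)⌋ = k i j) : ShiInequalities n k := by
  intro i t j hit htj hj
  have hsplit : x i - x (j + 1) = (x i - x (t + 1)) + (x (t + 1) - x (j + 1)) := by ring
  rw [← hx i t hit (by omega), ← hx (t + 1) j htj hj, ← hx i j (by omega) hj, hsplit]
  have := Int.le_floor_add_floor (x i - x (t + 1)) (x (t + 1) - x (j + 1))
  exact ⟨Int.le_floor_add _ _, by omega⟩

end

theorem alcove_coords_iff_general (n : ℕ) (k : ℕ → ℕ → ℤ) :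
    (∃ x : ℕ → ℝ, (∑ i ∈ Finset.range n, x i = 0) ∧
      ∀ i j, i ≤ j → j + 2 ≤ n →
        (k i j : ℝ) < x i - x (j + 1) ∧ x i - x (j + 1) < (k i j : ℝ) + 1) ↔
    (∀ i t j, i ≤ t → t < j → j + 2 ≤ n →
      k i t + k (t + 1) j ≤ k i j ∧ k i j ≤ k i t + k (t + 1) j + 1) := by
  constructor
  · rintro ⟨x, -, hx⟩
    exact shiInequalities_of_floor_eq fun i j hij hj =>
      Int.floor_eq_iff.2 ⟨(hx i j hij hj).1.le, (hx i j hij hj).2⟩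
  · intro hk
    obtain ⟨c, hc, hmono⟩ := exists_frac_Ioo_strictMono hk
    refine ⟨fun m => point k c m - (∑ j ∈ range n, point k c j) / n,
      sum_sub_mean_eq_zero n _, fun i j hij hj => ?_⟩
    simpa only [sub_sub_sub_cancel_right, Set.mem_Ioo] using point_sub_point_mem_Ioo hk hc hmono hij hj

/-- there is an alcove with Shi coordinates `k_{ij}` iff the coordinates
satisfy Shi's inequalities. -/
theorem alcove_coords_iff (n : ℕ) (hn : 2 ≤ n) (k : ℕ → ℕ → ℤ) :
    (∃ x : ℕ → ℝ, (∑ i ∈ Finset.range n, x i = 0) ∧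
      ∀ i j, i ≤ j → j + 2 ≤ n →
        (k i j : ℝ) < x i - x (j + 1) ∧ x i - x (j + 1) < (k i j : ℝ) + 1) ↔
    (∀ i t j, i ≤ t → t < j → j + 2 ≤ n →
      k i t + k (t + 1) j ≤ k i j ∧ k i j ≤ k i t + k (t + 1) j + 1) :=
  alcove_coords_iff_general n k

end Shi
end

section
/- Given nonnegative integers p_1 = 0 < p_2 < ⋯ < p_n with pairwise distinct residues mod n, the numbers k_{ij} = ⌊(p_{j+1} − p_i)/n⌋ for 1 ≤ i ≤ j ≤ n−1 satisfy k_{it} + k_{t+1,j} ≤ k_{ij} ≤ k_{it} + k_{t+1,j} + 1 for all i ≤ t < j, and hence are the Shi coordinates of a dominant alcove. -/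
/-!
With `y i = p i / n`, the numbers `k_{ij}` are the floors `⌊y_{j+1} - y_i⌋`, and Shi's inequalities
are the near-additivity `⌊a⌋ + ⌊b⌋ ≤ ⌊a + b⌋ ≤ ⌊a⌋ + ⌊b⌋ + 1` of the floor. The point
`x i = c - y i`, centred so that its coordinates sum to zero, satisfies `x i - x (j+1) = y_{j+1} - y_i`;
distinct residues mod `n` make these differences non-integers, so they lie strictly between
`k_{ij}` and `k_{ij} + 1`.
-/

open Finset

namespace Shi

section Floor

variable {k : Type*} [Field k] [LinearOrder k] [IsOrderedRing k] [FloorRing k]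

theorem ediv_natCast_eq_floor (d : ℤ) (n : ℕ) : d / (n : ℤ) = ⌊(d : k) / n⌋ := by
  rw [Int.floor_div_natCast, Int.floor_intCast]

theorem ediv_add_ediv_le_add_ediv_le_add_one (a b : ℤ) (n : ℕ) :
    a / n + b / n ≤ (a + b) / n ∧ (a + b) / n ≤ a / n + b / n + 1 := by
  simp only [ediv_natCast_eq_floor (k := ℚ), Int.cast_add, add_div]
  exact ⟨Int.le_floor_add _ _, by linarith [Int.le_floor_add_floor ((a : ℚ) / n) ((b : ℚ) / n)]⟩

theorem ediv_lt_div_lt_ediv_add_one {d : ℤ} {n : ℕ} (hn : 0 < n) (hd : ¬ (n : ℤ) ∣ d) :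
    ((d / n : ℤ) : k) < d / n ∧ (d : k) / n < ((d / n : ℤ) : k) + 1 := by
  rw [ediv_natCast_eq_floor (k := k)]
  refine ⟨Int.floor_lt_self_iff.2 ?_, Int.lt_floor_add_one _⟩
  rintro ⟨m, hm⟩
  refine hd ⟨m, ?_⟩
  rw [eq_div_iff (by positivity)] at hm
  exact_mod_cast hm.symm.trans (mul_comm _ _)

end Floor

theorem sum_average_sub_eq_zero {ι K : Type*} [Field K] [CharZero K] (s : Finset ι) (f : ι → K) :
    ∑ i ∈ s, ((∑ j ∈ s, f j) / #s - f i) = 0 := by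
  rcases s.eq_empty_or_nonempty with rfl | hs
  · simp
  rw [sum_sub_distrib, sum_const, nsmul_eq_mul, mul_div_cancel₀ _ (by simpa using hs.ne_empty),
    sub_self]

theorem floor_coords_are_alcove_general (n : ℕ) (p : ℕ → ℕ)
    (hmono : ∀ i j, i < j → j < n → p i < p j)
    (hres : ∀ i j, i < n → j < n → p i % n = p j % n → i = j) :
    (∀ i t j, i ≤ t → t < j → j + 2 ≤ n →
      ((p (t + 1) : ℤ) - p i) / n + ((p (j + 1) : ℤ) - p (t + 1)) / n
          ≤ ((p (j + 1) : ℤ) - p i) / n ∧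
      ((p (j + 1) : ℤ) - p i) / n
          ≤ ((p (t + 1) : ℤ) - p i) / n + ((p (j + 1) : ℤ) - p (t + 1)) / n + 1) ∧
    (∀ i j, i ≤ j → j + 2 ≤ n → 0 ≤ ((p (j + 1) : ℤ) - p i) / n) ∧
    ∃ x : ℕ → ℝ, (∑ i ∈ Finset.range n, x i = 0) ∧
      ∀ i j, i ≤ j → j + 2 ≤ n →
        ((((p (j + 1) : ℤ) - p i) / n : ℤ) : ℝ) < x i - x (j + 1) ∧
        x i - x (j + 1) < ((((p (j + 1) : ℤ) - p i) / n : ℤ) : ℝ) + 1 := by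
  refine ⟨fun i t j _ _ _ => ?_, fun i j _ _ => ?_, ?_⟩
  · simpa only [sub_add_sub_cancel'] using
      ediv_add_ediv_le_add_ediv_le_add_one ((p (t + 1) : ℤ) - p i) ((p (j + 1) : ℤ) - p (t + 1)) n
  · have hlt : p i < p (j + 1) := hmono i (j + 1) (by omega) (by omega)
    exact Int.ediv_nonneg (by omega) (Int.natCast_nonneg n)
  refine ⟨fun i => (∑ j ∈ range n, (p j : ℝ) / n) / n - p i / n, ?_, fun i j _ _ => ?_⟩
  · simpa using sum_average_sub_eq_zero (range n) fun i => (p i : ℝ) / n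
  have hdvd : ¬ (n : ℤ) ∣ (p (j + 1) : ℤ) - p i := fun h => by
    have := hres i (j + 1) (by omega) (by omega) (Nat.modEq_iff_dvd.2 h)
    omega
  rw [sub_sub_sub_cancel_left, ← sub_div]
  exact_mod_cast ediv_lt_div_lt_ediv_add_one (k := ℝ) (by omega) hdvd

/-- if `p_1 = 0 < p_2 < ⋯ < p_n` have pairwise distinct residues mod `n`,
then `k_{ij} = ⌊(p_{j+1} - p_i)/n⌋` satisfies Shi's inequalities, and hence these are the
Shi coordinates of a dominant alcove. -/
theorem floor_coords_are_alcove (n : ℕ) (hn : 2 ≤ n) (p : ℕ → ℕ) (hp0 : p 0 = 0)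
    (hmono : ∀ i j, i < j → j < n → p i < p j)
    (hres : ∀ i j, i < n → j < n → p i % n = p j % n → i = j) :
    (∀ i t j, i ≤ t → t < j → j + 2 ≤ n →
      ((p (t + 1) : ℤ) - p i) / n + ((p (j + 1) : ℤ) - p (t + 1)) / n
          ≤ ((p (j + 1) : ℤ) - p i) / n ∧
      ((p (j + 1) : ℤ) - p i) / n
          ≤ ((p (t + 1) : ℤ) - p i) / n + ((p (j + 1) : ℤ) - p (t + 1)) / n + 1) ∧
    (∀ i j, i ≤ j → j + 2 ≤ n → 0 ≤ ((p (j + 1) : ℤ) - p i) / n) ∧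
    ∃ x : ℕ → ℝ, (∑ i ∈ Finset.range n, x i = 0) ∧
      ∀ i j, i ≤ j → j + 2 ≤ n →
        ((((p (j + 1) : ℤ) - p i) / n : ℤ) : ℝ) < x i - x (j + 1) ∧
        x i - x (j + 1) < ((((p (j + 1) : ℤ) - p i) / n : ℤ) : ℝ) + 1 :=
  floor_coords_are_alcove_general n p hmono hres

end Shi
end

section
/- The map Ψ sending an n-core λ with level-number vector (0, b_1, …, b_{n−1}) to the alcove with Shi coordinates k_{ij} = ⌊(p_{j+1} − p_i)/n⌋, where p_1 < ⋯ < p_n is the increasing rearrangement of {b_{i−1}n + i − 1 : 1 ≤ i ≤ n}, is a bijection from n-cores to dominant alcoves. -/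
/-!
A partition is encoded by its β-set `B` (first-column hook lengths), and its hook lengths are
exactly the differences `x - y` with `x ∈ B` and `0 ≤ y < x`, `y ∉ B`. Hence a partition is an
`n`-core iff `B` is flush (`x ∈ B`, `n ≤ x` implies `x - n ∈ B`), and a flush `B ⊆ ℕ` is the
abacus whose runner `r` carries the beads `r, r + n, …, r + (b_r - 1) n`, where `b_r` is the
level number; `0 ∉ B` forces `b_0 = 0`. So `n`-cores correspond bijectively to level vectors with
`b_0 = 0`, i.e. to the sets `P = {b_r n + r}` of `n` naturals, one in each residue class, `0 ∈ P`.

Sorting `P` as `0 = p_0 < ⋯ < p_{n-1}`, the numbers `⌊(p_y - p_x)/n⌋` satisfy Shi's inequalities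
since `⌊a/n⌋ + ⌊b/n⌋ ≤ ⌊(a+b)/n⌋ ≤ ⌊a/n⌋ + ⌊b/n⌋ + 1`. Conversely a dominant alcove `k`
prescribes the levels `⌊p_x/n⌋ = k_{0,x-1}`, and for `x < y` the defect
`⌊p_y/n⌋ - ⌊p_x/n⌋ - ⌊(p_y - p_x)/n⌋ ∈ {0, 1}` says whether `p_y mod n < p_x mod n`. Shi's
inequalities make this comparison of residues a strict total order, so ranking the residues by it
reconstructs `P`, uniquely.
-/

open Finset

namespace Shi

/-- Number of boxes in column `j` (0-indexed) of the partition `lam` with `ℓ` positive parts: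
the conjugate partition. -/
def conjP (lam : ℕ → ℕ) (ℓ j : ℕ) : ℕ := ((Finset.range ℓ).filter (fun i => j < lam i)).card

/-- Hook length of the (0-indexed) box `(i, j)` of the partition `lam` having `ℓ` positive
parts. -/
def hookP (lam : ℕ → ℕ) (ℓ i j : ℕ) : ℤ :=
  (lam i : ℤ) - j + conjP lam ℓ j - i - 1

/-- `lam : ℕ → ℕ` (0-indexed, weakly decreasing, exactly `ℓ` positive parts) is an `n`-core:
no hook length is divisible by `n`. -/
def IsCore (n : ℕ) (lam : ℕ → ℕ) (ℓ : ℕ) : Prop :=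
  Antitone lam ∧ (∀ i, 0 < lam i ↔ i < ℓ) ∧
    ∀ i j, i < ℓ → j < lam i → ¬ ((n : ℤ) ∣ hookP lam ℓ i j)

/-- The `k`-th β-number (first column hook length) of `lam`, 0-indexed. -/
def betaP (lam : ℕ → ℕ) (ℓ k : ℕ) : ℤ := (lam k : ℤ) + ℓ - k - 1

/-- `x` is a bead of the original abacus of `lam`: a negative integer or a β-number. -/
def IsBead (lam : ℕ → ℕ) (ℓ : ℕ) (x : ℤ) : Prop := x < 0 ∨ ∃ k < ℓ, betaP lam ℓ k = x

/-- Level numbers of the original abacus of the `n`-core `lam`: `bvec n lam ℓ i` is the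
number of β-numbers congruent to `i` mod `n`, i.e. the level of the first gap on runner
`i`. -/
def bvec (n : ℕ) (lam : ℕ → ℕ) (ℓ i : ℕ) : ℕ :=
  ((Finset.range ℓ).filter (fun k => betaP lam ℓ k % (n : ℤ) = (i : ℤ))).card

/-- The increasing rearrangement `p_1 < ⋯ < p_n` (here 0-indexed) of the numbers
`b_{i-1}·n + i - 1`. -/
def psort (n : ℕ) (lam : ℕ → ℕ) (ℓ : ℕ) : List ℕ :=
  ((Finset.range n).image (fun i => bvec n lam ℓ i * n + i)).sort (· ≤ ·)

/-- Shi coordinates of the alcove `Ψ(lam)`: `k_{ij} = ⌊(p_{j+1} - p_i)/n⌋`, 0-indexed. -/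
def kOf (n : ℕ) (lam : ℕ → ℕ) (ℓ : ℕ) (i j : ℕ) : ℤ :=
  (((psort n lam ℓ).getD (j + 1) 0 : ℤ) - ((psort n lam ℓ).getD i 0 : ℤ)) / (n : ℤ)

/-- Shi's condition for a family of integers to be the coordinates of an alcove. -/
def IsAlcoveCoords (n : ℕ) (k : ℕ → ℕ → ℤ) : Prop :=
  ∀ i t j, i ≤ t → t < j → j + 2 ≤ n →
    k i t + k (t + 1) j ≤ k i j ∧ k i j ≤ k i t + k (t + 1) j + 1

/-- Coordinates of a dominant alcove. -/
def DomAlcoveCoords (n : ℕ) (k : ℕ → ℕ → ℤ) : Prop :=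
  (∀ i j, i ≤ j → j + 2 ≤ n → 0 ≤ k i j) ∧ IsAlcoveCoords n k

/-- `k` is the family of Shi coordinates of the `m`-minimal alcove of the dominant `m`-Shi
region with Shi tableau `e`: it is a dominant alcove of the region, coordinatewise minimal
among alcoves of the region. -/
def MinAlcRel (n m : ℕ) (e k : ℕ → ℕ → ℤ) : Prop :=
  DomAlcoveCoords n k ∧ (∀ i j, i ≤ j → j + 2 ≤ n → min (k i j) (m : ℤ) = e i j) ∧
  ∀ k', DomAlcoveCoords n k' →
    (∀ i j, i ≤ j → j + 2 ≤ n → min (k' i j) (m : ℤ) = e i j) →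
    ∀ i j, i ≤ j → j + 2 ≤ n → k i j ≤ k' i j

theorem mem_iff_lt_card_of_downward_closed {S : Finset ℕ} (hS : ∀ x ∈ S, ∀ y ≤ x, y ∈ S)
    (x : ℕ) : x ∈ S ↔ x < #S := by
  constructor
  · intro hx
    have : range (x + 1) ⊆ S := fun y hy => hS x hx y (by simpa [Nat.lt_succ_iff] using hy)
    simpa using card_le_card this
  · intro hx
    by_contra hxS
    have : S ⊆ range x := fun y hy => mem_range.2 (by
      by_contra hyx
      exact hxS (hS y hy x (by omega)))
    simpa using (card_le_card this).trans_lt' hx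

theorem lt_card_filter_range_iff {P : ℕ → Prop} [DecidablePred P]
    (hP : ∀ i j, i ≤ j → P j → P i) {ℓ k : ℕ} (hk : k < ℓ) :
    k < #{i ∈ range ℓ | P i} ↔ P k := by
  rw [← mem_iff_lt_card_of_downward_closed]
  · simp [hk]
  · intro x hx y hy
    simp only [mem_filter, mem_range] at hx ⊢
    exact ⟨by omega, hP y x hy hx.2⟩

theorem card_filter_lt_eq_of_injOn {n : ℕ} {f : ℕ → ℕ} (hf : Set.InjOn f (Set.Iio n))
    (hfn : ∀ x < n, f x < n) {x : ℕ} (hx : x < n) : #{y ∈ range n | f y < f x} = f x := by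
  have hinj : Set.InjOn f (range n) := fun a ha b hb => hf (mem_range.1 ha) (mem_range.1 hb)
  have himage : (range n).image f = range n :=
    eq_of_subset_of_card_le (fun _ h => by
      obtain ⟨y, hy, rfl⟩ := mem_image.1 h
      exact mem_range.2 (hfn y (mem_range.1 hy))) (card_image_of_injOn hinj).ge
  calc #{y ∈ range n | f y < f x} = #{z ∈ (range n).image f | z < f x} := by
        rw [filter_image, card_image_of_injOn (hinj.mono (filter_subset _ _))]
    _ = #(range (f x)) := by
        rw [himage]
        congr 1
        ext z
        simp only [mem_filter, mem_range]
        have := hfn x hx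
        omega
    _ = f x := card_range _

theorem div_mod_mul_add {n t r : ℕ} (hr : r < n) : (t * n + r) / n = t ∧ (t * n + r) % n = r :=
  (Nat.div_mod_unique (by omega)).2 ⟨by ring, hr⟩

theorem ediv_emod_mul_add {n : ℕ} (hn : 0 < n) {t r : ℤ} (hr0 : 0 ≤ r) (hr : r < n) :
    (t * n + r) / n = t ∧ (t * n + r) % n = r :=
  (Int.ediv_emod_unique (by omega)).2 ⟨by ring, hr0, hr⟩

theorem exists_eq_mul_add {n : ℕ} (hn : 0 < n) {x : ℤ} (hx : 0 ≤ x) :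
    ∃ t r : ℕ, r < n ∧ x = t * n + r := by
  have hn' : (0 : ℤ) < n := by exact_mod_cast hn
  have := Int.emod_lt_of_pos x hn'
  refine ⟨(x / n).toNat, (x % n).toNat, by omega, ?_⟩
  rw [Int.toNat_of_nonneg (Int.ediv_nonneg hx hn'.le),
    Int.toNat_of_nonneg (Int.emod_nonneg _ hn'.ne')]
  linarith [Int.emod_add_ediv_mul x n]

theorem sub_ediv_eq {n : ℕ} (hn : 0 < n) (a b : ℕ) :
    ((b : ℤ) - a) / n = (b / n : ℕ) - (a / n : ℕ) - if b % n < a % n then 1 else 0 := by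
  rw [Int.ediv_eq_iff_of_pos (by omega)]
  have ha : ((a / n : ℕ) : ℤ) * n + (a % n : ℕ) = a := by exact_mod_cast Nat.div_add_mod' a n
  have hb : ((b / n : ℕ) : ℤ) * n + (b % n : ℕ) = b := by exact_mod_cast Nat.div_add_mod' b n
  have ha' : ((a % n : ℕ) : ℤ) < n := by exact_mod_cast Nat.mod_lt a hn
  have hb' : ((b % n : ℕ) : ℤ) < n := by exact_mod_cast Nat.mod_lt b hn
  have ha0 : (0 : ℤ) ≤ (a % n : ℕ) := Nat.cast_nonneg _
  have hb0 : (0 : ℤ) ≤ (b % n : ℕ) := Nat.cast_nonneg _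
  split_ifs with h
  · have : ((b % n : ℕ) : ℤ) < (a % n : ℕ) := by exact_mod_cast h
    constructor <;> linarith
  · have : ((a % n : ℕ) : ℤ) ≤ (b % n : ℕ) := by exact_mod_cast not_lt.1 h
    constructor <;> linarith

def IsPartition (lam : ℕ → ℕ) (ℓ : ℕ) : Prop := Antitone lam ∧ ∀ i, 0 < lam i ↔ i < ℓ

theorem IsCore.isPartition {n : ℕ} {lam : ℕ → ℕ} {ℓ : ℕ} (h : IsCore n lam ℓ) :
    IsPartition lam ℓ :=
  ⟨h.1, h.2.1⟩

def betaSet (lam : ℕ → ℕ) (ℓ : ℕ) : Finset ℤ := (range ℓ).image (betaP lam ℓ)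

section Beta

variable {lam : ℕ → ℕ} {ℓ : ℕ}

theorem mem_betaSet {x : ℤ} : x ∈ betaSet lam ℓ ↔ ∃ k < ℓ, betaP lam ℓ k = x := by
  simp [betaSet]

theorem betaP_add_le (hA : Antitone lam) {k k' : ℕ} (h : k ≤ k') :
    betaP lam ℓ k' + (k' - k : ℕ) ≤ betaP lam ℓ k := by
  have := hA h
  simp only [betaP]
  omega

theorem betaP_strictAnti (hA : Antitone lam) : StrictAnti (betaP lam ℓ) := fun k k' h => by
  have := betaP_add_le (ℓ := ℓ) hA h.le
  omega

theorem IsPartition.one_le_betaP (h : IsPartition lam ℓ) {k : ℕ} (hk : k < ℓ) :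
    1 ≤ betaP lam ℓ k := by
  have := (h.2 k).2 hk
  simp only [betaP]
  omega

theorem IsPartition.one_le_of_mem_betaSet (h : IsPartition lam ℓ) {x : ℤ}
    (hx : x ∈ betaSet lam ℓ) : 1 ≤ x := by
  obtain ⟨k, hk, rfl⟩ := mem_betaSet.1 hx
  exact h.one_le_betaP hk

theorem card_betaSet (hA : Antitone lam) : #(betaSet lam ℓ) = ℓ := by
  rw [betaSet, card_image_of_injective _ (betaP_strictAnti hA).injective, card_range]

theorem IsPartition.exists_gap_hookP_eq (h : IsPartition lam ℓ) {i j : ℕ} (hi : i < ℓ)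
    (hj : j < lam i) :
    ∃ y : ℤ, 0 ≤ y ∧ y < betaP lam ℓ i ∧ y ∉ betaSet lam ℓ ∧
      hookP lam ℓ i j = betaP lam ℓ i - y := by
  set c := conjP lam ℓ j
  have hc : ∀ k < ℓ, k < c ↔ j < lam k := fun k hk =>
    lt_card_filter_range_iff (fun _ _ hij hj => hj.trans_le (h.1 hij)) hk
  have hcℓ : c ≤ ℓ := (card_filter_le _ _).trans (card_range ℓ).le
  have hic : i < c := (hc i hi).2 hj
  refine ⟨j + ℓ - c, by omega, by simp only [betaP]; omega, ?_, by simp only [hookP, betaP]; omega⟩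
  rw [mem_betaSet]
  rintro ⟨k, hk, hβ⟩
  simp only [betaP] at hβ
  by_cases hkc : k < c
  · have := (hc k hk).1 hkc
    omega
  · have := mt (hc k hk).2 hkc
    omega

theorem IsPartition.exists_hookP_eq_of_gap (h : IsPartition lam ℓ) {i : ℕ} (hi : i < ℓ) {y : ℤ}
    (hy0 : 0 ≤ y) (hy : y < betaP lam ℓ i) (hyB : y ∉ betaSet lam ℓ) :
    ∃ j < lam i, hookP lam ℓ i j = betaP lam ℓ i - y := by
  set c := #{k ∈ range ℓ | y < betaP lam ℓ k}
  have hc : ∀ k < ℓ, k < c ↔ y < betaP lam ℓ k := fun k hk =>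
    lt_card_filter_range_iff
      (fun _ _ hij hj => hj.trans_le ((betaP_strictAnti h.1).antitone hij)) hk
  have hne : ∀ k < ℓ, betaP lam ℓ k ≠ y := fun k hk hk' => hyB (mem_betaSet.2 ⟨k, hk, hk'⟩)
  have hcℓ : c ≤ ℓ := (card_filter_le _ _).trans (card_range ℓ).le
  have hic : i < c := (hc i hi).2 hy
  have hlast : betaP lam ℓ (c - 1) > y := (hc (c - 1) (by omega)).1 (by omega)
  have hfirst : c < ℓ → betaP lam ℓ c < y := fun hcl =>
    lt_of_le_of_ne (not_lt.1 (mt (hc c hcl).2 (lt_irrefl c))) (hne c hcl)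
  have hyc : ℓ ≤ y + c := by
    rcases eq_or_lt_of_le hcℓ with hcl | hcl
    · omega
    · have := betaP_add_le (ℓ := ℓ) h.1 (by omega : c ≤ ℓ - 1)
      have := h.one_le_betaP (by omega : ℓ - 1 < ℓ)
      have := hfirst hcl
      omega
  set j := (y + c - ℓ).toNat
  have hrow : ∀ k < ℓ, j < lam k ↔ y < betaP lam ℓ k := by
    intro k hk
    rw [← hc k hk]
    have hlam : (lam k : ℤ) = betaP lam ℓ k - ℓ + k + 1 := by simp only [betaP]; omega
    by_cases hkc : k < c
    · have := betaP_add_le (ℓ := ℓ) h.1 (by omega : k ≤ c - 1)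
      omega
    · have := betaP_add_le (ℓ := ℓ) h.1 (not_lt.1 hkc)
      have := hfirst (by omega)
      omega
  have hconj : conjP lam ℓ j = c := by
    rw [conjP]
    congr 1
    exact filter_congr fun k hk => hrow k (mem_range.1 hk)
  refine ⟨j, (hrow i hi).2 hy, ?_⟩
  simp only [hookP, hconj, betaP]
  omega

end Beta

def IsFlush (n : ℕ) (B : Finset ℤ) : Prop := ∀ x ∈ B, (n : ℤ) ≤ x → x - n ∈ B

theorem IsFlush.sub_mul_mem {n : ℕ} {B : Finset ℤ} (hB : IsFlush n B) {x : ℤ} (hx : x ∈ B) :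
    ∀ m : ℕ, n * (m : ℤ) ≤ x → x - n * m ∈ B
  | 0, _ => by simpa using hx
  | m + 1, hm => by
    push_cast at hm
    have := hB _ (hB.sub_mul_mem hx m (by nlinarith)) (by linarith)
    push_cast
    convert this using 1
    ring

theorem isCore_iff {n : ℕ} (hn : 0 < n) {lam : ℕ → ℕ} {ℓ : ℕ} :
    IsCore n lam ℓ ↔ IsPartition lam ℓ ∧ IsFlush n (betaSet lam ℓ) := by
  constructor
  · intro h
    refine ⟨h.isPartition, fun x hx hnx => ?_⟩
    obtain ⟨i, hi, rfl⟩ := mem_betaSet.1 hx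
    by_contra hgap
    obtain ⟨j, hj, hhook⟩ :=
      h.isPartition.exists_hookP_eq_of_gap hi (by omega) (by omega) hgap
    exact h.2.2 i j hi hj ⟨1, by rw [hhook]; ring⟩
  · rintro ⟨h, hB⟩
    refine ⟨h.1, h.2, fun i j hi hj ⟨t, ht⟩ => ?_⟩
    obtain ⟨y, hy0, hyi, hyB, hhook⟩ := h.exists_gap_hookP_eq hi hj
    lift t to ℕ using (by nlinarith)
    have := hB.sub_mul_mem (mem_betaSet.2 ⟨i, hi, rfl⟩) t (by linarith)
    exact hyB (by convert this using 1; linarith)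

theorem IsPartition.eq_of_betaSet_eq {lam lam' : ℕ → ℕ} {ℓ ℓ' : ℕ} (h : IsPartition lam ℓ)
    (h' : IsPartition lam' ℓ') (hB : betaSet lam ℓ = betaSet lam' ℓ') : lam = lam' ∧ ℓ = ℓ' := by
  obtain rfl : ℓ = ℓ' := by rw [← card_betaSet (ℓ := ℓ) h.1, hB, card_betaSet h'.1]
  have hsort : ∀ {μ : ℕ → ℕ}, IsPartition μ ℓ → betaSet μ ℓ = betaSet lam ℓ →
      (fun i : Fin ℓ => betaP μ ℓ (ℓ - 1 - i)) = (betaSet lam ℓ).orderEmbOfFin (card_betaSet h.1) :=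
    fun hμ hμB => orderEmbOfFin_unique _ (fun i => hμB ▸ mem_betaSet.2 ⟨_, by omega, rfl⟩)
      (fun i j hij => betaP_strictAnti hμ.1 (by omega))
  have hβ : ∀ k < ℓ, betaP lam ℓ k = betaP lam' ℓ k := fun k hk => by
    have := congrFun ((hsort h rfl).trans (hsort h' hB.symm).symm) ⟨ℓ - 1 - k, by omega⟩
    simpa [show ℓ - 1 - (ℓ - 1 - k) = k by omega] using this
  refine ⟨funext fun k => ?_, rfl⟩
  by_cases hk : k < ℓ
  · have := hβ k hk
    simp only [betaP] at this
    omega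
  · have := h.2 k
    have := h'.2 k
    omega

theorem exists_isPartition_betaSet_eq (S : Finset ℤ) (hS : ∀ x ∈ S, 1 ≤ x) :
    ∃ lam ℓ, IsPartition lam ℓ ∧ betaSet lam ℓ = S := by
  induction S using Finset.induction_on_max with
  | empty => exact ⟨fun _ => 0, 0, ⟨antitone_const, by simp⟩, by simp [betaSet]⟩
  | insert a s has ih =>
    obtain ⟨lam, ℓ, h, hB⟩ := ih fun x hx => hS x (mem_insert_of_mem hx)
    have ha : 1 ≤ a := hS a (mem_insert_self a s)
    -- the new largest β-number `a` becomes the first row, of length `a - ℓ`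
    have hfit : (lam 0 : ℤ) + ℓ ≤ a ∧ (ℓ : ℤ) < a := by
      rcases Nat.eq_zero_or_pos ℓ with rfl | hℓ
      · have := h.2 0
        simp only [lt_self_iff_false, iff_false, not_lt, nonpos_iff_eq_zero] at this
        omega
      · have := has _ (hB ▸ mem_betaSet.2 ⟨0, hℓ, rfl⟩)
        have := (h.2 0).2 hℓ
        simp only [betaP] at *
        omega
    set μ : ℕ → ℕ := fun k => if k = 0 then (a - ℓ).toNat else lam (k - 1)
    refine ⟨μ, ℓ + 1, ⟨antitone_nat_of_succ_le fun k => ?_, fun k => ?_⟩, ?_⟩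
    · rcases k with _ | k
      · simp [μ]
        omega
      · simpa [μ] using h.1 (Nat.le_succ k)
    · rcases k with _ | k
      · simp [μ]
        omega
      · simp [μ, h.2 k]
    · rw [betaSet, range_add_one', image_insert, map_eq_image, image_image, ← hB, betaSet]
      congr 1
      · simp [betaP, μ]
        omega
      · refine image_congr fun k _ => ?_
        show betaP μ (ℓ + 1) (k + 1) = betaP lam ℓ k
        simp [betaP, μ]
        omega

def abacus (n : ℕ) (b : ℕ → ℕ) : Finset ℤ :=
  (range n).biUnion fun r => (range (b r)).image fun t : ℕ => (t * n + r : ℤ)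

section Abacus

variable {n : ℕ} {b : ℕ → ℕ}

theorem mem_abacus (hn : 0 < n) {x : ℤ} : x ∈ abacus n b ↔ 0 ≤ x ∧ x / n < b (x % n).toNat := by
  simp only [abacus, mem_biUnion, mem_range, mem_image]
  constructor
  · rintro ⟨r, hr, t, ht, rfl⟩
    obtain ⟨hq, hm⟩ := ediv_emod_mul_add hn (t := t) (r := r) (by omega) (by omega)
    rw [hq, hm]
    exact ⟨by positivity, by simpa using ht⟩
  · rintro ⟨hx, hlt⟩
    obtain ⟨t, r, hr, rfl⟩ := exists_eq_mul_add hn hx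
    obtain ⟨hq, hm⟩ := ediv_emod_mul_add hn (t := t) (r := r) (by omega) (by omega)
    rw [hq, hm] at hlt
    exact ⟨r, hr, t, by simpa using hlt, rfl⟩

theorem mul_add_mem_abacus (hn : 0 < n) {t r : ℕ} (hr : r < n) :
    (t * n + r : ℤ) ∈ abacus n b ↔ t < b r := by
  obtain ⟨hq, hm⟩ := ediv_emod_mul_add hn (t := t) (r := r) (by omega) (by omega)
  rw [mem_abacus hn, hq, hm]
  simp only [Int.toNat_natCast, Nat.cast_lt, and_iff_right_iff_imp]
  exact fun _ => by positivity

theorem abacus_congr {b' : ℕ → ℕ} (h : ∀ r < n, b r = b' r) : abacus n b = abacus n b' :=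
  biUnion_congr rfl fun r hr => by rw [h r (mem_range.1 hr)]

theorem isFlush_abacus (hn : 0 < n) : IsFlush n (abacus n b) := by
  intro x hx hnx
  rw [mem_abacus hn] at hx ⊢
  have hq : (x - n) / n = x / n - 1 := by
    rw [sub_eq_add_neg, ← neg_one_mul, Int.add_mul_ediv_right _ _ (by omega)]
    ring
  have hm : (x - n) % n = x % n := by
    rw [sub_eq_add_neg, ← neg_one_mul, Int.add_mul_emod_self_right]
  rw [hq, hm]
  omega

theorem card_filter_abacus (hn : 0 < n) {r : ℕ} (hr : r < n) :
    #{x ∈ abacus n b | x % (n : ℤ) = r} = b r := by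
  have : {x ∈ abacus n b | x % (n : ℤ) = r} = (range (b r)).image fun t : ℕ => (t * n + r : ℤ) := by
    ext x
    simp only [mem_filter, mem_image, mem_range]
    constructor
    · rintro ⟨hx, hxr⟩
      obtain ⟨t, r', hr', rfl⟩ := exists_eq_mul_add hn ((mem_abacus hn).1 hx).1
      obtain rfl : r' = r := by
        rw [(ediv_emod_mul_add hn (t := t) (r := r') (by omega) (by omega)).2] at hxr
        exact_mod_cast hxr
      exact ⟨t, (mul_add_mem_abacus hn hr').1 hx, rfl⟩
    · rintro ⟨t, ht, rfl⟩
      exact ⟨(mul_add_mem_abacus hn hr).2 ht, (ediv_emod_mul_add hn (by omega) (by omega)).2⟩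
  rw [this, card_image_of_injective _ fun t t' h => ?_, card_range]
  have : ((t : ℤ) - t') * n = 0 := by linarith
  rcases mul_eq_zero.1 this with h | h <;> omega

theorem one_le_of_mem_abacus (hn : 0 < n) (hb0 : b 0 = 0) {x : ℤ} (hx : x ∈ abacus n b) :
    1 ≤ x := by
  rw [mem_abacus hn] at hx
  by_contra h
  obtain rfl : x = 0 := by omega
  simp [hb0] at hx

theorem IsFlush.mul_add_mem_iff (hn : 0 < n) {B : Finset ℤ} (hB : IsFlush n B)
    (hB0 : ∀ x ∈ B, 0 ≤ x) {r : ℕ} (hr : r < n) (t : ℕ) :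
    (t * n + r : ℤ) ∈ B ↔ t < #{y ∈ B | y % (n : ℤ) = r} := by
  have hn' : (0 : ℤ) < n := by exact_mod_cast hn
  set R := {y ∈ B | y % (n : ℤ) = r}
  have hquot : ∀ y ∈ R, y = (y / n).toNat * n + r := fun y hy => by
    rw [mem_filter] at hy
    rw [Int.toNat_of_nonneg (Int.ediv_nonneg (hB0 y hy.1) hn'.le), ← hy.2]
    linarith [Int.emod_add_ediv_mul y n]
  -- the levels of the beads on runner `r` form an initial segment of `ℕ`
  set Q := R.image fun y : ℤ => (y / n).toNat
  have hQ : #Q = #R :=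
    card_image_of_injOn fun y hy y' hy' (h : (y / n).toNat = (y' / n).toNat) => by
      rw [hquot y hy, hquot y' hy', h]
  have hmemQ : ∀ t : ℕ, t ∈ Q ↔ (t * n + r : ℤ) ∈ B := by
    intro t
    obtain ⟨hq, hm⟩ := ediv_emod_mul_add hn (t := t) (r := r) (by omega) (by omega)
    constructor
    · intro h
      obtain ⟨y, hy, rfl⟩ := mem_image.1 h
      rw [← hquot y hy]
      exact (mem_filter.1 hy).1
    · exact fun h => mem_image.2 ⟨_, mem_filter.2 ⟨h, hm⟩, by simp [hq]⟩
  have hdown : ∀ t ∈ Q, ∀ t' ≤ t, t' ∈ Q := by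
    intro t ht t' ht'
    rw [hmemQ] at ht ⊢
    have := hB.sub_mul_mem ht (t - t') (by push_cast [ht']; nlinarith)
    convert this using 1
    push_cast [ht']
    ring
  rw [← hmemQ, mem_iff_lt_card_of_downward_closed hdown, hQ]

theorem IsFlush.eq_abacus (hn : 0 < n) {B : Finset ℤ} (hB : IsFlush n B)
    (hB0 : ∀ x ∈ B, 0 ≤ x) : B = abacus n fun r => #{x ∈ B | x % (n : ℤ) = r} := by
  ext x
  by_cases hx : 0 ≤ x
  · obtain ⟨t, r, hr, rfl⟩ := exists_eq_mul_add hn hx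
    rw [mul_add_mem_abacus hn hr, hB.mul_add_mem_iff hn hB0 hr]
  · exact ⟨fun h => absurd (hB0 x h) hx, fun h => absurd ((mem_abacus hn).1 h).1 hx⟩

end Abacus

section Core

variable {n : ℕ} {lam : ℕ → ℕ} {ℓ : ℕ}

theorem bvec_eq_card_filter (hA : Antitone lam) (r : ℕ) :
    bvec n lam ℓ r = #{x ∈ betaSet lam ℓ | x % (n : ℤ) = r} := by
  rw [bvec, betaSet, filter_image, card_image_of_injective _ (betaP_strictAnti hA).injective]

theorem IsCore.betaSet_eq_abacus (hn : 0 < n) (h : IsCore n lam ℓ) :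
    betaSet lam ℓ = abacus n (bvec n lam ℓ) := by
  obtain ⟨hp, hB⟩ := (isCore_iff hn).1 h
  calc betaSet lam ℓ = abacus n fun r => #{x ∈ betaSet lam ℓ | x % (n : ℤ) = r} :=
        hB.eq_abacus hn fun x hx => by have := hp.one_le_of_mem_betaSet hx; omega
    _ = abacus n (bvec n lam ℓ) := congrArg _ (funext fun r => (bvec_eq_card_filter hp.1 r).symm)

theorem IsCore.bvec_zero (hn : 0 < n) (h : IsCore n lam ℓ) : bvec n lam ℓ 0 = 0 := by
  by_contra h0
  have : (0 : ℤ) ∈ betaSet lam ℓ := by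
    rw [h.betaSet_eq_abacus hn, mem_abacus hn]
    simp only [le_refl, EuclideanDomain.zero_div, Int.zero_emod, Int.toNat_zero, true_and]
    omega
  have := h.isPartition.one_le_of_mem_betaSet this
  omega

theorem IsCore.eq_of_bvec_eq (hn : 0 < n) {lam' : ℕ → ℕ} {ℓ' : ℕ} (h : IsCore n lam ℓ)
    (h' : IsCore n lam' ℓ') (hb : ∀ r < n, bvec n lam ℓ r = bvec n lam' ℓ' r) :
    lam = lam' ∧ ℓ = ℓ' :=
  h.isPartition.eq_of_betaSet_eq h'.isPartition <| by
    rw [h.betaSet_eq_abacus hn, h'.betaSet_eq_abacus hn, abacus_congr hb]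

theorem exists_isCore_bvec_eq (hn : 0 < n) {b : ℕ → ℕ} (hb0 : b 0 = 0) :
    ∃ lam ℓ, IsCore n lam ℓ ∧ ∀ r < n, bvec n lam ℓ r = b r := by
  obtain ⟨lam, ℓ, h, hB⟩ :=
    exists_isPartition_betaSet_eq (abacus n b) fun _ => one_le_of_mem_abacus hn hb0
  refine ⟨lam, ℓ, (isCore_iff hn).2 ⟨h, hB ▸ isFlush_abacus hn⟩, fun r hr => ?_⟩
  rw [bvec_eq_card_filter h.1, hB, card_filter_abacus hn hr]

end Core

def levelSet (n : ℕ) (b : ℕ → ℕ) : Finset ℕ := (range n).image fun r => b r * n + r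

section LevelSet

variable {n : ℕ} {b : ℕ → ℕ}

theorem mem_levelSet (hn : 0 < n) {x : ℕ} : x ∈ levelSet n b ↔ x / n = b (x % n) := by
  simp only [levelSet, mem_image, mem_range]
  constructor
  · rintro ⟨r, hr, rfl⟩
    rw [(div_mod_mul_add hr).1, (div_mod_mul_add hr).2]
  · intro h
    exact ⟨x % n, Nat.mod_lt x hn, by rw [← h, Nat.div_add_mod']⟩

theorem card_levelSet : #(levelSet n b) = n := by
  rw [levelSet, card_image_of_injOn, card_range]
  intro r hr r' hr' h
  rw [← (div_mod_mul_add (t := b r) (mem_range.1 hr)).2,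
    ← (div_mod_mul_add (t := b r') (mem_range.1 hr')).2]
  exact congrArg (· % n) h

theorem levelSet_congr {b' : ℕ → ℕ} (h : ∀ r < n, b r = b' r) : levelSet n b = levelSet n b' :=
  image_congr fun r hr => by simp only [h r (mem_range.1 hr)]

theorem eq_of_levelSet_eq (hn : 0 < n) {b' : ℕ → ℕ} (h : levelSet n b = levelSet n b') {r : ℕ}
    (hr : r < n) : b r = b' r := by
  have : b r * n + r ∈ levelSet n b' := h ▸ mem_image_of_mem _ (mem_range.2 hr)
  rwa [mem_levelSet hn, (div_mod_mul_add hr).1, (div_mod_mul_add hr).2] at this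

theorem exists_levelSet_eq_image (hn : 0 < n) {p : ℕ → ℕ}
    (hp : Set.InjOn (fun x => p x % n) (Set.Iio n)) (hp0 : p 0 = 0) :
    ∃ b : ℕ → ℕ, b 0 = 0 ∧ levelSet n b = (range n).image p := by
  classical
  set b : ℕ → ℕ := fun r => ∑ x ∈ range n, if p x % n = r then p x / n else 0
  have hb : ∀ x < n, b (p x % n) = p x / n := by
    intro x hx
    show (∑ y ∈ range n, if p y % n = p x % n then p y / n else 0) = p x / n
    rw [sum_eq_single_of_mem x (mem_range.2 hx) fun y hy hyx => if_neg fun h =>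
      hyx (hp (mem_range.1 hy) hx h), if_pos rfl]
  refine ⟨b, by simpa [hp0] using hb 0 hn, (eq_of_subset_of_card_le ?_ ?_).symm⟩
  · intro _ hpx
    obtain ⟨x, hx, rfl⟩ := mem_image.1 hpx
    exact (mem_levelSet hn).2 (hb x (mem_range.1 hx)).symm
  · rw [card_levelSet, card_image_of_injOn fun x hx y hy h =>
      hp (mem_range.1 hx) (mem_range.1 hy) (congrArg (· % n) h),
      card_range]

end LevelSet

section SortedList

variable {S : Finset ℕ}

theorem getD_sort_lt_getD_sort {i j : ℕ} (hij : i < j) (hj : j < #S) :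
    (S.sort (· ≤ ·)).getD i 0 < (S.sort (· ≤ ·)).getD j 0 := by
  rw [List.getD_eq_getElem _ _ (by rw [length_sort]; omega),
    List.getD_eq_getElem _ _ (by rw [length_sort]; omega)]
  exact (sortedLT_sort S).getElem_lt_getElem_of_lt hij

theorem getD_sort_mem {i : ℕ} (hi : i < #S) : (S.sort (· ≤ ·)).getD i 0 ∈ S := by
  rw [List.getD_eq_getElem _ _ (by rwa [length_sort]), ← mem_sort (· ≤ ·)]
  exact List.getElem_mem _

theorem exists_getD_sort_eq {x : ℕ} (hx : x ∈ S) : ∃ i < #S, (S.sort (· ≤ ·)).getD i 0 = x := by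
  obtain ⟨i, hi, he⟩ := List.mem_iff_getElem.1 ((mem_sort (· ≤ ·)).2 hx)
  exact ⟨i, by rwa [length_sort] at hi, by rw [List.getD_eq_getElem _ _ hi, he]⟩

theorem sort_image_range {n : ℕ} {p : ℕ → ℕ} (hp : ∀ x y, x < y → y < n → p x < p y) :
    ((range n).image p).sort (· ≤ ·) = (List.range n).map p := by
  refine (sortedLT_sort _).eq_of_mem_iff ?_ fun a => by simp [mem_sort]
  rw [List.sortedLT_iff_pairwise, List.pairwise_map]
  exact List.pairwise_lt_range.imp_of_mem fun _ hb h => hp _ _ h (List.mem_range.1 hb)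

end SortedList

theorem domAlcoveCoords_of_monotone {n : ℕ} (hn : 0 < n) {p : ℕ → ℤ}
    (hp : ∀ i j, i ≤ j → j < n → p i ≤ p j) :
    DomAlcoveCoords n fun i j => (p (j + 1) - p i) / n := by
  refine ⟨fun i j hij hj => Int.ediv_nonneg (by linarith [hp i (j + 1) (by omega) (by omega)])
    (by positivity), fun i t j hit htj hj => ?_⟩
  have := Int.add_ediv_of_pos (a := p (t + 1) - p i) (b := p (j + 1) - p (t + 1))
    (c := n) (by omega)
  rw [show p (t + 1) - p i + (p (j + 1) - p (t + 1)) = p (j + 1) - p i by ring] at this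
  dsimp only
  rw [this]
  split_ifs <;> omega

theorem kOf_domAlcoveCoords {n : ℕ} (hn : 0 < n) (lam : ℕ → ℕ) (ℓ : ℕ) :
    DomAlcoveCoords n (kOf n lam ℓ) :=
  domAlcoveCoords_of_monotone (p := fun m => ((psort n lam ℓ).getD m 0 : ℤ)) hn
    fun i j hij hj => by
      rcases hij.eq_or_lt with rfl | hlt
      · rfl
      · exact_mod_cast (getD_sort_lt_getD_sort (S := levelSet n (bvec n lam ℓ)) hlt
          (by rwa [card_levelSet])).le

def Realizes (n : ℕ) (k : ℕ → ℕ → ℤ) (p : ℕ → ℕ) : Prop :=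
  p 0 = 0 ∧ Set.InjOn (fun x => p x % n) (Set.Iio n) ∧
    ∀ x y, x < y → y < n → ((p y : ℤ) - p x) / n = k x (y - 1)

/- For the configuration `p` realizing `k`: `level k x = ⌊p x / n⌋`; for `x < y`, `defect k x y`
is `1` if `p y % n < p x % n` and `0` otherwise; `ResLT k x y` means `p x % n < p y % n`. -/
def level (k : ℕ → ℕ → ℤ) (x : ℕ) : ℤ := if x = 0 then 0 else k 0 (x - 1)

def defect (k : ℕ → ℕ → ℤ) (x y : ℕ) : ℤ := level k y - level k x - k x (y - 1)

def ResLT (k : ℕ → ℕ → ℤ) (x y : ℕ) : Prop :=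
  x < y ∧ defect k x y = 0 ∨ y < x ∧ defect k y x = 1

instance (k : ℕ → ℕ → ℤ) : DecidableRel (ResLT k) := fun x y => by
  unfold ResLT
  infer_instance

def resRank (n : ℕ) (k : ℕ → ℕ → ℤ) (x : ℕ) : ℕ := #{y ∈ range n | ResLT k y x}

def shiPoint (n : ℕ) (k : ℕ → ℕ → ℤ) (x : ℕ) : ℕ :=
  (level k x).toNat * n + resRank n k x

section Realization

variable {n : ℕ} {k : ℕ → ℕ → ℤ}

theorem level_nonneg (hk : DomAlcoveCoords n k) {x : ℕ} (hx : x < n) : 0 ≤ level k x := by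
  unfold level
  split_ifs
  · rfl
  · exact hk.1 0 (x - 1) (by omega) (by omega)

theorem defect_eq_zero_or_one (hk : DomAlcoveCoords n k) {x y : ℕ} (hxy : x < y) (hy : y < n) :
    defect k x y = 0 ∨ defect k x y = 1 := by
  have hy0 : y ≠ 0 := by omega
  rcases eq_or_ne x 0 with rfl | hx0
  · simp [defect, level, hy0]
  · have := hk.2 0 (x - 1) (y - 1) (by omega) (by omega) (by omega)
    rw [show x - 1 + 1 = x by omega] at this
    simp only [defect, level, hx0, hy0, if_false]
    omega

theorem defect_trans (hk : DomAlcoveCoords n k) {x y z : ℕ} (hxy : x < y) (hyz : y < z)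
    (hz : z < n) :
    (defect k x y = 0 → defect k y z = 0 → defect k x z = 0) ∧
      (defect k x y = 1 → defect k y z = 1 → defect k x z = 1) := by
  have := hk.2 x (y - 1) (z - 1) (by omega) (by omega) (by omega)
  rw [show y - 1 + 1 = y by omega] at this
  have := defect_eq_zero_or_one hk (hxy.trans hyz) hz
  unfold defect at *
  omega

theorem resLT_irrefl (x : ℕ) : ¬ ResLT k x x := by
  simp [ResLT]

theorem resLT_or_resLT (hk : DomAlcoveCoords n k) {x y : ℕ} (hx : x < n) (hy : y < n)
    (hxy : x ≠ y) : ResLT k x y ∨ ResLT k y x := by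
  unfold ResLT
  rcases lt_or_gt_of_ne hxy with h | h
  · have := defect_eq_zero_or_one hk h hy
    omega
  · have := defect_eq_zero_or_one hk h hx
    omega

theorem resLT_asymm {x y : ℕ} (hxy : ResLT k x y) : ¬ ResLT k y x := by
  unfold ResLT at *
  omega

theorem not_resLT_cycle (hk : DomAlcoveCoords n k) {a b c : ℕ} (hab : a < b) (hac : a < c)
    (hbc : b ≠ c) (hb : b < n) (hc : c < n) : ¬ (ResLT k a b ∧ ResLT k b c ∧ ResLT k c a) := by
  unfold ResLT
  rcases lt_or_gt_of_ne hbc with h | h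
  · have := defect_trans hk hab h hc
    omega
  · have := defect_trans hk hac h hb
    omega

theorem resLT_trans (hk : DomAlcoveCoords n k) {x y z : ℕ} (hx : x < n) (hy : y < n)
    (hz : z < n) (hxy : ResLT k x y) (hyz : ResLT k y z) : ResLT k x z := by
  by_contra hxz
  have hxz' : x ≠ z := by
    rintro rfl
    exact resLT_asymm hxy hyz
  have hzx := (resLT_or_resLT hk hx hz hxz').resolve_left hxz
  have hxy' : x ≠ y := by
    rintro rfl
    exact resLT_irrefl x hxy
  have hyz' : y ≠ z := by
    rintro rfl
    exact resLT_irrefl y hyz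
  obtain hmin | hmin | hmin : x < y ∧ x < z ∨ y < x ∧ y < z ∨ z < x ∧ z < y := by omega
  · exact not_resLT_cycle hk hmin.1 hmin.2 hyz' hy hz ⟨hxy, hyz, hzx⟩
  · exact not_resLT_cycle hk hmin.2 hmin.1 hxz'.symm hz hx ⟨hyz, hzx, hxy⟩
  · exact not_resLT_cycle hk hmin.1 hmin.2 hxy' hx hy ⟨hzx, hxy, hyz⟩

theorem resRank_lt_resRank (hk : DomAlcoveCoords n k) {x y : ℕ} (hx : x < n) (hy : y < n)
    (h : ResLT k x y) : resRank n k x < resRank n k y := by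
  refine card_lt_card ((ssubset_iff_of_subset fun z hz => ?_).2 ⟨x, ?_, ?_⟩)
  · simp only [mem_filter, mem_range] at hz ⊢
    exact ⟨hz.1, resLT_trans hk hz.1 hx hy hz.2 h⟩
  · simp [hx, h]
  · simp [resLT_irrefl]

theorem resRank_lt_resRank_iff (hk : DomAlcoveCoords n k) {x y : ℕ} (hx : x < n) (hy : y < n) :
    resRank n k x < resRank n k y ↔ ResLT k x y := by
  refine ⟨fun h => ?_, resRank_lt_resRank hk hx hy⟩
  by_contra hxy
  rcases eq_or_ne x y with rfl | hne
  · exact lt_irrefl _ h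
  · exact lt_asymm h (resRank_lt_resRank hk hy hx ((resLT_or_resLT hk hx hy hne).resolve_left hxy))

theorem resRank_lt {x : ℕ} (hx : x < n) : resRank n k x < n :=
  calc resRank n k x < #(range n) :=
        card_lt_card (filter_ssubset.2 ⟨x, mem_range.2 hx, resLT_irrefl x⟩)
    _ = n := card_range n

theorem resRank_zero : resRank n k 0 = 0 := by
  rw [resRank, card_eq_zero, filter_eq_empty_iff]
  intro y _ h
  unfold ResLT defect level at h
  split_ifs at h <;> omega

theorem realizes_shiPoint (hn : 0 < n) (hk : DomAlcoveCoords n k) :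
    Realizes n k (shiPoint n k) := by
  have hdm : ∀ {x}, x < n → shiPoint n k x / n = (level k x).toNat ∧
      shiPoint n k x % n = resRank n k x := fun hx => div_mod_mul_add (resRank_lt hx)
  refine ⟨by simp [shiPoint, level, resRank_zero], fun x hx y hy h => ?_, fun x y hxy hy => ?_⟩
  · replace h : resRank n k x = resRank n k y := by
      rw [← (hdm hx).2, ← (hdm hy).2]
      exact h
    by_contra hne
    rcases resLT_or_resLT hk hx hy hne with h' | h'
    · exact (resRank_lt_resRank hk hx hy h').ne h
    · exact (resRank_lt_resRank hk hy hx h').ne h.symm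
  · have hx : x < n := hxy.trans hy
    rw [sub_ediv_eq hn, (hdm hy).1, (hdm hx).1, (hdm hy).2, (hdm hx).2]
    have := level_nonneg hk hx
    have := level_nonneg hk hy
    have := defect_eq_zero_or_one hk hxy hy
    split_ifs with h
    · have := (resRank_lt_resRank_iff hk hy hx).1 h
      unfold ResLT defect at *
      omega
    · have := mt (resRank_lt_resRank_iff hk hy hx).2 h
      unfold ResLT defect at *
      omega

variable {p : ℕ → ℕ}

theorem Realizes.div_eq_level (hp : Realizes n k p) {x : ℕ} (hx : x < n) :
    ((p x / n : ℕ) : ℤ) = level k x := by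
  rcases eq_or_ne x 0 with rfl | hx0
  · simp [hp.1, level]
  · have := hp.2.2 0 x (by omega) hx
    rw [hp.1, Nat.cast_zero, sub_zero] at this
    rw [level, if_neg hx0, ← this]
    push_cast
    rfl

theorem Realizes.defect_eq (hn : 0 < n) (hp : Realizes n k p) {x y : ℕ} (hxy : x < y)
    (hy : y < n) : defect k x y = if p y % n < p x % n then 1 else 0 := by
  have := hp.2.2 x y hxy hy
  rw [sub_ediv_eq hn, hp.div_eq_level hy, hp.div_eq_level (hxy.trans hy)] at this
  unfold defect
  split_ifs at this ⊢ <;> omega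

theorem Realizes.mod_lt_mod_iff (hn : 0 < n) (hp : Realizes n k p) {x y : ℕ} (hx : x < n)
    (hy : y < n) : p x % n < p y % n ↔ ResLT k x y := by
  have hne : x ≠ y → p x % n ≠ p y % n := fun h h' => h (hp.2.1 hx hy h')
  unfold ResLT
  rcases lt_trichotomy x y with h | rfl | h
  · have := hp.defect_eq hn h hy
    have := hne h.ne
    split_ifs at * <;> omega
  · simp
  · have := hp.defect_eq hn h hx
    have := hne h.ne'
    split_ifs at * <;> omega

theorem Realizes.lt (hn : 0 < n) (hk : DomAlcoveCoords n k) (hp : Realizes n k p) {x y : ℕ}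
    (hxy : x < y) (hy : y < n) : p x < p y := by
  have h := hp.2.2 x y hxy hy
  have h0 := hk.1 x (y - 1) (by omega) (by omega)
  rw [← h, Int.ediv_nonneg_iff_of_pos (by omega)] at h0
  have : p x ≠ p y := fun h' => hxy.ne (hp.2.1 (hxy.trans hy) hy (by simp only [h']))
  omega

theorem Realizes.eq_shiPoint (hn : 0 < n) (hp : Realizes n k p) {x : ℕ} (hx : x < n) :
    p x = shiPoint n k x := by
  have hres : p x % n = resRank n k x := by
    rw [← card_filter_lt_eq_of_injOn (f := fun y => p y % n) hp.2.1 (fun y _ => Nat.mod_lt _ hn) hx,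
      resRank]
    exact congrArg card (filter_congr fun y hy => hp.mod_lt_mod_iff hn (mem_range.1 hy) hx)
  have hlev : p x / n = (level k x).toNat := by
    rw [← hp.div_eq_level hx, Int.toNat_natCast]
  rw [shiPoint, ← hres, ← hlev, Nat.div_add_mod']

end Realization

section Psi

variable {n : ℕ} {k : ℕ → ℕ → ℤ} {lam : ℕ → ℕ} {ℓ : ℕ}

theorem psort_eq_sort_levelSet : psort n lam ℓ = (levelSet n (bvec n lam ℓ)).sort (· ≤ ·) := rfl

theorem IsCore.realizes_getD_psort (hn : 0 < n) (h : IsCore n lam ℓ)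
    (hmatch : ∀ i j, i ≤ j → j + 2 ≤ n → kOf n lam ℓ i j = k i j) :
    Realizes n k fun m => (psort n lam ℓ).getD m 0 := by
  have hS : #(levelSet n (bvec n lam ℓ)) = n := card_levelSet
  set q := fun m => (psort n lam ℓ).getD m 0
  have hlt : ∀ {x y}, x < y → y < n → q x < q y := fun hxy hy =>
    getD_sort_lt_getD_sort hxy (hy.trans_eq hS.symm)
  have hmem : ∀ {x}, x < n → q x / n = bvec n lam ℓ (q x % n) := fun hx =>
    (mem_levelSet hn).1 (getD_sort_mem (hx.trans_eq hS.symm))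
  refine ⟨?_, fun x hx y hy (hxy : q x % n = q y % n) => ?_, fun x y hxy hy => ?_⟩
  · obtain ⟨m, hm, hm0⟩ := exists_getD_sort_eq
      ((mem_levelSet (b := bvec n lam ℓ) (x := 0) hn).2 (by simp [h.bvec_zero hn]))
    rcases Nat.eq_zero_or_pos m with rfl | hm'
    · exact hm0
    · have := hlt hm' (hm.trans_eq hS)
      simp only [q, psort_eq_sort_levelSet] at this
      omega
  · have hq : q x = q y := by
      rw [← Nat.div_add_mod' (q x) n, hmem hx, hxy, ← hmem hy, Nat.div_add_mod']
    by_contra hne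
    rcases lt_or_gt_of_ne hne with h' | h'
    · exact (hlt h' hy).ne hq
    · exact (hlt h' hx).ne' hq
  · have := hmatch x (y - 1) (by omega) (by omega)
    rwa [kOf, Nat.sub_add_cancel (by omega)] at this

theorem IsCore.psort_eq_map_shiPoint (hn : 0 < n) (h : IsCore n lam ℓ)
    (hmatch : ∀ i j, i ≤ j → j + 2 ≤ n → kOf n lam ℓ i j = k i j) :
    psort n lam ℓ = (List.range n).map (shiPoint n k) := by
  have hp := h.realizes_getD_psort hn hmatch
  have hlen : (psort n lam ℓ).length = n := by
    rw [psort_eq_sort_levelSet, length_sort, card_levelSet]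
  refine List.ext_getElem (by simp [hlen]) fun m h1 _ => ?_
  rw [List.getElem_map, List.getElem_range, ← hp.eq_shiPoint hn (hlen ▸ h1),
    List.getD_eq_getElem _ _ h1]

theorem exists_isCore_psort_eq (hn : 0 < n) (hk : DomAlcoveCoords n k) :
    ∃ lam ℓ, IsCore n lam ℓ ∧ psort n lam ℓ = (List.range n).map (shiPoint n k) := by
  have hp := realizes_shiPoint hn hk
  obtain ⟨b, hb0, hb⟩ := exists_levelSet_eq_image hn hp.2.1 hp.1
  obtain ⟨lam, ℓ, h, hbv⟩ := exists_isCore_bvec_eq hn hb0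
  refine ⟨lam, ℓ, h, ?_⟩
  rw [psort_eq_sort_levelSet, levelSet_congr hbv, hb,
    sort_image_range fun _ _ hxy hy => hp.lt hn hk hxy hy]

theorem kOf_eq_of_psort_eq_map {p : ℕ → ℕ} (hp : Realizes n k p)
    (h : psort n lam ℓ = (List.range n).map p) {i j : ℕ} (hij : i ≤ j) (hj : j + 2 ≤ n) :
    kOf n lam ℓ i j = k i j := by
  have := hp.2.2 i (j + 1) (by omega) (by omega)
  simpa [kOf, h, List.getD_eq_getElem?_getD, show i < n by omega, show j + 1 < n by omega]
    using this

theorem bvec_eq_of_psort_eq (hn : 0 < n) {lam' : ℕ → ℕ} {ℓ' : ℕ}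
    (h : psort n lam ℓ = psort n lam' ℓ') {r : ℕ} (hr : r < n) :
    bvec n lam ℓ r = bvec n lam' ℓ' r := by
  have := congrArg List.toFinset h
  rw [psort_eq_sort_levelSet, psort_eq_sort_levelSet, sort_toFinset, sort_toFinset] at this
  exact eq_of_levelSet_eq hn this hr

end Psi

/-- the map `Ψ` sending an `n`-core to the alcove with Shi coordinates
`k_{ij} = ⌊(p_{j+1} - p_i)/n⌋` is a bijection from `n`-cores to dominant alcoves. -/
theorem psi_bijection (n : ℕ) (hn : 2 ≤ n) :
    (∀ lam ℓ, IsCore n lam ℓ → DomAlcoveCoords n (kOf n lam ℓ)) ∧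
    (∀ k : ℕ → ℕ → ℤ, DomAlcoveCoords n k →
      ∃! c : {c : (ℕ → ℕ) × ℕ // IsCore n c.1 c.2},
        ∀ i j, i ≤ j → j + 2 ≤ n → kOf n c.1.1 c.1.2 i j = k i j) := by
  have hn0 : 0 < n := by omega
  refine ⟨fun lam ℓ _ => kOf_domAlcoveCoords hn0 lam ℓ, fun k hk => ?_⟩
  obtain ⟨lam, ℓ, h, hps⟩ := exists_isCore_psort_eq hn0 hk
  refine ⟨⟨(lam, ℓ), h⟩, fun i j => kOf_eq_of_psort_eq_map (realizes_shiPoint hn0 hk) hps, ?_⟩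
  rintro ⟨⟨lam', ℓ'⟩, h'⟩ hmatch
  have hps' := h'.psort_eq_map_shiPoint hn0 hmatch
  obtain ⟨rfl, rfl⟩ := h'.eq_of_bvec_eq hn0 h fun _ => bvec_eq_of_psort_eq hn0 (hps'.trans hps.symm)
  rfl

end Shi
end

section
/- Let {e_{ij}}_{1≤i≤j≤n−1} be integers with 0 ≤ e_{ij} ≤ m. Then {e_{ij}} is the Shi tableau of a dominant region of the m-Shi arrangement of type A_{n−1} if and only if for all i ≤ j: e_{ij} = e_{it} + e_{t+1,j} or e_{it} + e_{t+1,j} + 1 whenever e_{it} + e_{t+1,j} ≤ m − 1 for all t with i ≤ t < j, and e_{ij} = m otherwise. -/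
/-!
The floors `k_{ij} = ⌊⟨x, α_{ij}⟩⌋` of a point in the dominant chamber satisfy Shi's inequalities
`k_{it} + k_{t+1,j} ≤ k_{ij} ≤ k_{it} + k_{t+1,j} + 1`, and truncating them at `m` gives exactly the
stated criterion. Conversely, a tableau satisfying the criterion is the truncation of the Shi
coordinates of its `m`-minimal alcove: keep the entries below `m` and replace an entry equal to `m`
by `max (m, max_t (k_{it} + k_{t+1,j}))`. These coordinates satisfy Shi's inequalities, and every
family satisfying them is realized by a point, built one coordinate at a time: `x_{p+1}` must lie in
the open unit intervals `(x_i - k_{ip} - 1, x_i - k_{ip})`, `i ≤ p`, which pairwise intersect by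
the inequalities, hence have a common point.
-/

open Finset

namespace Shi

/-- Inner product of `x` with the positive root `α_{ij} = e_i - e_{j+1}` (0-indexed
`i ≤ j ≤ n-2`). -/
def inn (x : ℕ → ℝ) (i j : ℕ) : ℝ := x i - x (j + 1)

def SumZero (n : ℕ) (x : ℕ → ℝ) : Prop := ∑ i ∈ Finset.range n, x i = 0

/-- `x` is a point of the type `A_{n-1}` ambient space lying in the open dominant chamber
and on no hyperplane of the `m`-Shi arrangement, hence an interior point of a dominant
`m`-Shi region. -/
def RegionPoint (n m : ℕ) (x : ℕ → ℝ) : Prop :=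
  SumZero n x ∧
  (∀ i j, i ≤ j → j + 2 ≤ n → 0 < inn x i j) ∧
  (∀ i j, i ≤ j → j + 2 ≤ n → ∀ t : ℤ, -(m : ℤ) < t → t ≤ m → inn x i j ≠ (t : ℝ))

/-- `e` is the Shi tableau of the dominant `m`-Shi region containing `x`:
`e_{ij} = min(⌊⟨x, α_{ij}⟩⌋, m)`, which is constant on the region and equals
`min(k_{ij}, m)` for the Shi coordinates `k` of the `m`-minimal alcove of the region. -/
def TabOf (n m : ℕ) (x : ℕ → ℝ) (e : ℕ → ℕ → ℤ) : Prop :=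
  ∀ i j, i ≤ j → j + 2 ≤ n → e i j = min ⌊inn x i j⌋ (m : ℤ)

/-- `e` is the Shi tableau of some dominant region of the `m`-Shi arrangement of type
`A_{n-1}`. -/
def IsShiTab (n m : ℕ) (e : ℕ → ℕ → ℤ) : Prop :=
  ∃ x, RegionPoint n m x ∧ TabOf n m x e

/-- `p` lies in the closure of the `m`-Shi region containing `x`. -/
def InClosure (n m : ℕ) (x p : ℕ → ℝ) : Prop :=
  SumZero n p ∧ ∀ i j, i ≤ j → j + 2 ≤ n → ∀ t : ℤ, -(m : ℤ) < t → t ≤ m →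
    (((t : ℝ) < inn x i j → (t : ℝ) ≤ inn p i j) ∧ (inn x i j < t → inn p i j ≤ t))

/-- The hyperplane `H_{α_{uv}, m}` is a separating wall for the dominant `m`-Shi region
containing `x`: the region lies on the far side of the hyperplane from the fundamental
alcove, and the closure of the region contains a point of the hyperplane lying on no other
hyperplane of the arrangement (so the hyperplane supports a facet). -/
def SepWall (n m : ℕ) (x : ℕ → ℝ) (u v : ℕ) : Prop :=
  (m : ℝ) < inn x u v ∧
  ∃ p, InClosure n m x p ∧ inn p u v = (m : ℝ) ∧
    ∀ i j, i ≤ j → j + 2 ≤ n → ∀ t : ℤ, -(m : ℤ) < t → t ≤ m →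
      ¬(i = u ∧ j = v ∧ t = (m : ℤ)) → inn p i j ≠ (t : ℝ)

/-- The combinatorial criterion for `H_{α_{uv}, m}` to be a separating wall. -/
def SepCrit (m : ℕ) (e : ℕ → ℕ → ℤ) (u v : ℕ) : Prop :=
  e u v = (m : ℤ) ∧ ∀ t, u ≤ t → t < v → e u t + e (t + 1) v = (m : ℤ) - 1

/-- The region with Shi tableau `e` has `H_{α_{uv}, m}` as a separating wall. -/
def SepWallTab (n m : ℕ) (e : ℕ → ℕ → ℤ) (u v : ℕ) : Prop :=
  ∃ x, RegionPoint n m x ∧ TabOf n m x e ∧ SepWall n m x u v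

/-- A tableau function normalized to be `0` outside the staircase index domain. -/
def Normalized (n : ℕ) (e : ℕ → ℕ → ℤ) : Prop :=
  ∀ i j, ¬(i ≤ j ∧ j + 2 ≤ n) → e i j = 0

theorem _root_.Finset.exists_between_of_forall_lt {ι α : Type*} [LinearOrder α] [DenselyOrdered α]
    [Nonempty α] {s : Finset ι} {l u : ι → α} (h : ∀ a ∈ s, ∀ b ∈ s, l a < u b) :
    ∃ c, ∀ a ∈ s, l a < c ∧ c < u a := by
  rcases s.eq_empty_or_nonempty with rfl | hs
  · simp
  have hlu : s.sup' hs l < s.inf' hs u := by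
    simpa only [sup'_lt_iff, lt_inf'_iff] using fun b hb a ha => h a ha b hb
  obtain ⟨c, hlc, hcu⟩ := _root_.exists_between hlu
  exact ⟨c, fun a ha => ⟨(le_sup' l ha).trans_lt hlc, hcu.trans_le (inf'_le u ha)⟩⟩

/-- Shi's inequalities; by Shi's theorem they characterize the families `⌊⟨x, α_{ij}⟩⌋` coming
from alcoves. -/
def AlcoveIneqs (n : ℕ) (K : ℕ → ℕ → ℤ) : Prop :=
  ∀ i t j, i ≤ t → t < j → j + 2 ≤ n →
    K i t + K (t + 1) j ≤ K i j ∧ K i j ≤ K i t + K (t + 1) j + 1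

def ShiCriterion (n m : ℕ) (e : ℕ → ℕ → ℤ) : Prop :=
  ∀ i j, i ≤ j → j + 2 ≤ n → ∀ t, i ≤ t → t < j →
    ((e i t + e (t + 1) j ≤ (m : ℤ) - 1 →
      (e i j = e i t + e (t + 1) j ∨ e i j = e i t + e (t + 1) j + 1)) ∧
     ((m : ℤ) - 1 < e i t + e (t + 1) j → e i j = (m : ℤ)))

theorem inn_add_const (x : ℕ → ℝ) (c : ℝ) (i j : ℕ) :
    inn (fun k => x k + c) i j = inn x i j := by
  simp only [inn]; ring

theorem exists_sumZero_add_const (n : ℕ) (x : ℕ → ℝ) : ∃ c, SumZero n fun i => x i + c := by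
  refine ⟨-(∑ i ∈ range n, x i) / n, ?_⟩
  rw [SumZero, sum_add_distrib, sum_const, card_range, nsmul_eq_mul]
  rcases n.eq_zero_or_pos with rfl | hn
  · simp
  · field_simp; ring

section Floor

theorem alcoveIneqs_floor_inn (n : ℕ) (x : ℕ → ℝ) : AlcoveIneqs n fun i j => ⌊inn x i j⌋ := by
  intro i t j _ _ _
  have hsplit : inn x i j = inn x i t + inn x (t + 1) j := by simp only [inn]; ring
  simp only [hsplit]
  exact ⟨Int.le_floor_add _ _, by linarith [Int.le_floor_add_floor (inn x i t) (inn x (t + 1) j)]⟩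

theorem shiCriterion_min_of_alcoveIneqs {n m : ℕ} {K e : ℕ → ℕ → ℤ} (hK : AlcoveIneqs n K)
    (hK₀ : ∀ i j, i ≤ j → j + 2 ≤ n → 0 ≤ K i j)
    (he : ∀ i j, i ≤ j → j + 2 ≤ n → e i j = min (K i j) m) : ShiCriterion n m e := by
  intro i j hij hj t hit htj
  have hsand := hK i t j hit htj hj
  have := hK₀ i t hit (by omega)
  have := hK₀ (t + 1) j (by omega) hj
  rw [he i j hij hj, he i t hit (by omega), he (t + 1) j (by omega) hj]
  omega

theorem shiCriterion_of_isShiTab {n m : ℕ} {e : ℕ → ℕ → ℤ} (h : IsShiTab n m e) :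
    ShiCriterion n m e := by
  obtain ⟨x, ⟨-, hpos, -⟩, htab⟩ := h
  exact shiCriterion_min_of_alcoveIneqs (alcoveIneqs_floor_inn n x)
    (fun i j hij hj => Int.floor_nonneg.2 (hpos i j hij hj).le) htab

end Floor

section Lift

variable {n m : ℕ} {e : ℕ → ℕ → ℤ}

/-- The Shi coordinates of the `m`-minimal alcove of the region with tableau `e`: entries below
`m` are kept, and an entry equal to `m` is raised just enough to satisfy the lower Shi
inequalities. -/
def liftTab (m : ℕ) (e : ℕ → ℕ → ℤ) (i j : ℕ) : ℤ :=
  if h : i < j ∧ e i j = m then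
    max ((Ico i j).attach.sup' ⟨⟨i, mem_Ico.2 ⟨le_rfl, h.1⟩⟩, mem_attach _ _⟩
      fun t => liftTab m e i t + liftTab m e (t.1 + 1) j) m
  else e i j
termination_by j - i
decreasing_by all_goals have := mem_Ico.1 t.2; omega

theorem liftTab_of_ne {i j : ℕ} (h : e i j ≠ m) : liftTab m e i j = e i j := by
  rw [liftTab, dif_neg (by tauto)]

theorem le_liftTab_of_eq {i j : ℕ} (h : e i j = m) : (m : ℤ) ≤ liftTab m e i j := by
  rw [liftTab]
  split_ifs
  · exact le_max_right _ _
  · exact h.ge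

theorem add_le_liftTab {i t j : ℕ} (h : e i j = m) (hit : i ≤ t) (htj : t < j) :
    liftTab m e i t + liftTab m e (t + 1) j ≤ liftTab m e i j := by
  conv_rhs => rw [liftTab, dif_pos ⟨hit.trans_lt htj, h⟩]
  exact le_max_of_le_left <| le_sup' (fun t : Ico i j => liftTab m e i t + liftTab m e (t.1 + 1) j)
    (mem_attach _ ⟨t, mem_Ico.2 ⟨hit, htj⟩⟩)

theorem liftTab_le {i j : ℕ} {c : ℤ} (h : e i j = m) (hmc : (m : ℤ) ≤ c)
    (hc : ∀ t, i ≤ t → t < j → liftTab m e i t + liftTab m e (t + 1) j ≤ c) :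
    liftTab m e i j ≤ c := by
  rw [liftTab]
  split_ifs with hij
  · exact max_le (sup'_le _ _ fun t _ => hc t (mem_Ico.1 t.2).1 (mem_Ico.1 t.2).2) hmc
  · exact h ▸ hmc

theorem min_liftTab {i j : ℕ} (h : e i j ≤ m) : min (liftTab m e i j) m = e i j := by
  rcases h.lt_or_eq with h | h
  · rw [liftTab_of_ne h.ne, min_eq_left h.le]
  · rw [min_eq_right (le_liftTab_of_eq h), h]

theorem le_liftTab {i j : ℕ} : e i j ≤ liftTab m e i j := by
  by_cases h : e i j = m
  · rw [h]
    exact le_liftTab_of_eq h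
  · exact (liftTab_of_ne h).ge

theorem alcoveIneqs_liftTab (hbd : ∀ i j, i ≤ j → j + 2 ≤ n → 0 ≤ e i j ∧ e i j ≤ (m : ℤ))
    (he : ShiCriterion n m e) : AlcoveIneqs n (liftTab m e) := by
  intro i t j hit htj hj
  induction hd : j - i using Nat.strong_induction_on generalizing i t j with
  | _ d ih =>
  have hcrit := he i j (hit.trans htj.le) hj t hit htj
  have hbit := hbd i t hit (by omega)
  have hbtj := hbd (t + 1) j (by omega) hj
  rcases (hbd i j (hit.trans htj.le) hj).2.lt_or_eq with hlt | heq
  · have hsum : e i t + e (t + 1) j ≤ m - 1 := by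
      by_contra hsum
      exact hlt.ne (hcrit.2 (by omega))
    rw [liftTab_of_ne hlt.ne, liftTab_of_ne (show e i t ≠ m by omega),
      liftTab_of_ne (show e (t + 1) j ≠ m by omega)]
    have := hcrit.1 hsum
    omega
  refine ⟨add_le_liftTab heq hit htj, liftTab_le heq ?_ fun u hiu huj => ?_⟩
  · have hle_it : e i t ≤ liftTab m e i t := le_liftTab
    have hle_tj : e (t + 1) j ≤ liftTab m e (t + 1) j := le_liftTab
    by_cases hsum : e i t + e (t + 1) j ≤ m - 1
    · have := hcrit.1 hsum
      omega
    · omega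
  -- compare the cuts at `u` and `t` through Shi's inequalities on the two overlapping pieces
  rcases lt_trichotomy u t with hut | rfl | htu
  · have h₁ := (ih (t - i) (by omega) i u t hiu hut (by omega) rfl).1
    have h₂ := (ih (j - (u + 1)) (by omega) (u + 1) t j hut htj hj rfl).2
    omega
  · omega
  · have h₁ := (ih (u - i) (by omega) i t u hit htu (by omega) rfl).2
    have h₂ := (ih (j - (t + 1)) (by omega) (t + 1) u j htu huj hj rfl).1
    omega

end Lift

section Realization

variable {n : ℕ} {K : ℕ → ℕ → ℤ}

theorem exists_inn_mem_Ioo (hK : AlcoveIneqs n K) :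
    ∃ x : ℕ → ℝ, ∀ i j, i ≤ j → j + 2 ≤ n → (K i j : ℝ) < inn x i j ∧ inn x i j < K i j + 1 := by
  suffices ∀ p, ∃ x : ℕ → ℝ, ∀ i j, i ≤ j → j < p → j + 2 ≤ n →
      (K i j : ℝ) < inn x i j ∧ inn x i j < K i j + 1 by
    obtain ⟨x, hx⟩ := this n
    exact ⟨x, fun i j hij hj => hx i j hij (by omega) hj⟩
  intro p
  induction p with
  | zero => exact ⟨0, fun i j _ hj => absurd hj (Nat.not_lt_zero j)⟩
  | succ p ih =>
    obtain ⟨x, hx⟩ := ih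
    by_cases hp : p + 2 ≤ n
    swap
    · exact ⟨x, fun i j hij hj hjn => hx i j hij (by omega) hjn⟩
    have hoverlap : ∀ a ∈ range (p + 1), ∀ b ∈ range (p + 1),
        x a - K a p - 1 < x b - K b p := by
      intro a ha b hb
      rw [mem_range] at ha hb
      rcases lt_trichotomy a b with hab | rfl | hba
      · obtain ⟨b, rfl⟩ : ∃ b', b = b' + 1 := ⟨b - 1, by omega⟩
        have hx' := (hx a b (by omega) (by omega) (by omega)).2
        have hK' : ((K a b + K (b + 1) p : ℤ) : ℝ) ≤ K a p := by
          exact_mod_cast (hK a b p (by omega) (by omega) hp).1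
        push_cast at hK'
        simp only [inn] at hx'
        linarith
      · linarith
      · obtain ⟨a, rfl⟩ : ∃ a', a = a' + 1 := ⟨a - 1, by omega⟩
        have hx' := (hx b a (by omega) (by omega) (by omega)).1
        have hK' : (K b p : ℝ) ≤ ((K b a + K (a + 1) p + 1 : ℤ) : ℝ) := by
          exact_mod_cast (hK b a p (by omega) (by omega) hp).2
        push_cast at hK'
        simp only [inn] at hx'
        linarith
    obtain ⟨c, hc⟩ := exists_between_of_forall_lt hoverlap
    refine ⟨Function.update x (p + 1) c, fun i j hij hj hjn => ?_⟩
    have hi : Function.update x (p + 1) c i = x i := Function.update_of_ne (by omega) _ _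
    rcases Nat.lt_succ_iff_lt_or_eq.1 hj with hj | rfl
    · have hj' : Function.update x (p + 1) c (j + 1) = x (j + 1) :=
        Function.update_of_ne (by omega) _ _
      simpa only [inn, hi, hj'] using hx i j hij hj hjn
    · have := hc i (mem_range.2 (by omega))
      simp only [inn, hi, Function.update_self]
      constructor <;> linarith

theorem isShiTab_of_alcoveIneqs {m : ℕ} {e : ℕ → ℕ → ℤ} (hK : AlcoveIneqs n K)
    (hKe : ∀ i j, i ≤ j → j + 2 ≤ n → 0 ≤ K i j ∧ min (K i j) m = e i j) : IsShiTab n m e := by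
  obtain ⟨x, hx⟩ := exists_inn_mem_Ioo hK
  obtain ⟨c, hc⟩ := exists_sumZero_add_const n x
  have hfloor : ∀ i j, i ≤ j → j + 2 ≤ n → ⌊inn (fun k => x k + c) i j⌋ = K i j := by
    intro i j hij hj
    rw [inn_add_const, Int.floor_eq_iff]
    exact ⟨(hx i j hij hj).1.le, (hx i j hij hj).2⟩
  refine ⟨fun k => x k + c, ⟨hc, fun i j hij hj => ?_, fun i j hij hj t _ _ ht => ?_⟩,
    fun i j hij hj => ?_⟩
  · rw [inn_add_const]
    exact lt_of_le_of_lt (by exact_mod_cast (hKe i j hij hj).1) (hx i j hij hj).1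
  · have hKt := hfloor i j hij hj
    rw [ht, Int.floor_intCast] at hKt
    exact (hx i j hij hj).1.ne' (by rw [← inn_add_const x c, ht, hKt])
  · rw [hfloor i j hij hj, (hKe i j hij hj).2]

end Realization

theorem shi_tableau_iff_general (n m : ℕ) (e : ℕ → ℕ → ℤ)
    (hbd : ∀ i j, i ≤ j → j + 2 ≤ n → 0 ≤ e i j ∧ e i j ≤ (m : ℤ)) :
    IsShiTab n m e ↔
    (∀ i j, i ≤ j → j + 2 ≤ n → ∀ t, i ≤ t → t < j →
      ((e i t + e (t + 1) j ≤ (m : ℤ) - 1 →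
        (e i j = e i t + e (t + 1) j ∨ e i j = e i t + e (t + 1) j + 1)) ∧
       ((m : ℤ) - 1 < e i t + e (t + 1) j → e i j = (m : ℤ)))) :=
  ⟨shiCriterion_of_isShiTab, fun he => isShiTab_of_alcoveIneqs (alcoveIneqs_liftTab hbd he)
    fun i j hij hj => ⟨(hbd i j hij hj).1.trans le_liftTab, min_liftTab (hbd i j hij hj).2⟩⟩

/-- characterization of Shi tableaux of dominant `m`-Shi regions. -/
theorem shi_tableau_iff (n m : ℕ) (hn : 2 ≤ n) (hm : 1 ≤ m) (e : ℕ → ℕ → ℤ)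
    (hbd : ∀ i j, i ≤ j → j + 2 ≤ n → 0 ≤ e i j ∧ e i j ≤ (m : ℤ)) :
    IsShiTab n m e ↔
    (∀ i j, i ≤ j → j + 2 ≤ n → ∀ t, i ≤ t → t < j →
      ((e i t + e (t + 1) j ≤ (m : ℤ) - 1 →
        (e i j = e i t + e (t + 1) j ∨ e i j = e i t + e (t + 1) j + 1)) ∧
       ((m : ℤ) - 1 < e i t + e (t + 1) j → e i j = (m : ℤ)))) :=
  shi_tableau_iff_general n m e hbd

end Shi
end

section
/- Let λ be an n-core with level-number vector (0, b_1, …, b_{n−1}). Then the first hook length satisfies h_{11}^λ = n(m−1) + 1 if and only if b_1 = m and b_i < m for all 2 ≤ i ≤ n−1. -/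
open Finset

namespace Shi

/-- for an `n`-core with level numbers `(0, b_1, …, b_{n-1})`,
`h_{11} = n(m-1) + 1` iff `b_1 = m` and `b_i < m` for `2 ≤ i ≤ n-1`. -/
theorem hook_iff_levels (n m : ℕ) (hn : 2 ≤ n) (hm : 1 ≤ m) (lam : ℕ → ℕ) (ℓ : ℕ)
    (hcore : IsCore n lam ℓ) (b : ℕ → ℕ)
    (hb : ∀ i < n, ∀ q : ℤ, IsBead lam ℓ (q * n + (i : ℤ)) ↔ q < (b i : ℤ)) :
    ((lam 0 : ℤ) + ℓ - 1 = n * ((m : ℤ) - 1) + 1) ↔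
    (b 1 = m ∧ ∀ i, 2 ≤ i → i < n → b i < m) := by
  obtain ⟨hmono, hpos, -⟩ := hcore
  have hn0 : (0:ℤ) < n := by exact_mod_cast Nat.lt_of_lt_of_le Nat.zero_lt_two hn
  have hm1 : (1:ℤ) ≤ (m:ℤ) := by exact_mod_cast hm
  have hbeta_le : ∀ k, betaP lam ℓ k ≤ (lam 0 : ℤ) + ℓ - 1 := by
    intro k
    have h1 : lam k ≤ lam 0 := hmono (Nat.zero_le k)
    simp only [betaP]; omega
  have hbeta_pos : ∀ k, k < ℓ → 1 ≤ betaP lam ℓ k := by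
    intro k hk
    have h1 : 0 < lam k := (hpos k).mpr hk
    simp only [betaP]; omega
  have hmax : ∀ x : ℤ, IsBead lam ℓ x → x ≤ (lam 0 : ℤ) + ℓ - 1 ∨ x < 0 := by
    rintro x (hx | ⟨k, hk, rfl⟩)
    · exact Or.inr hx
    · exact Or.inl (hbeta_le k)
  have hb0 : b 0 = 0 := by
    have h0 : ¬ IsBead lam ℓ 0 := by
      rintro (h | ⟨k, hk, hbk⟩)
      · omega
      · have := hbeta_pos k hk; omega
    have h1 := hb 0 (by omega) 0
    simp only [zero_mul, Nat.cast_zero, add_zero] at h1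
    have h2 : ¬ ((0:ℤ) < (b 0 : ℤ)) := fun h => h0 (h1.mpr h)
    omega
  constructor
  · intro hL
    have hnm : (0:ℤ) ≤ (n:ℤ) * ((m:ℤ) - 1) := mul_nonneg hn0.le (by linarith)
    have hℓ : 1 ≤ ℓ := by
      by_contra h
      have hl0 : lam 0 = 0 := by
        by_contra h2
        have := (hpos 0).mp (Nat.pos_of_ne_zero h2); omega
      have hz : ((lam 0 : ℤ) + ℓ - 1) = -1 := by
        have : (ℓ:ℕ) = 0 := by omega
        rw [hl0, this]; norm_num
      rw [hz] at hL; linarith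
    have hbead0 : IsBead lam ℓ ((lam 0 : ℤ) + ℓ - 1) := by
      refine Or.inr ⟨0, hℓ, ?_⟩
      simp only [betaP, Nat.cast_zero]; ring
    have h1le : ((m:ℤ) - 1) < (b 1 : ℤ) := by
      refine (hb 1 (by omega) ((m:ℤ)-1)).mp ?_
      have key : ((m:ℤ)-1) * (n:ℤ) + ((1:ℕ):ℤ) = (lam 0:ℤ) + ℓ - 1 := by
        rw [hL]; push_cast; ring
      rw [key]; exact hbead0
    have h1ge : ¬ ((m:ℤ) < (b 1 : ℤ)) := by
      intro hgt
      have hbm := (hb 1 (by omega) (m:ℤ)).mpr hgt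
      have e1 : (n:ℤ) * ((m:ℤ)-1) = (m:ℤ) * n - n := by ring
      rcases hmax _ hbm with h | h
      · push_cast at h; linarith
      · have : (0:ℤ) ≤ (m:ℤ) * n := mul_nonneg (by linarith) hn0.le
        push_cast at h; linarith
    have hb1 : b 1 = m := by omega
    refine ⟨hb1, fun i h2i hin => ?_⟩
    by_contra hbi
    push_neg at hbi
    have hbead : IsBead lam ℓ (((m:ℤ)-1) * n + i) :=
      (hb i (by omega) _).mpr (by omega)
    have hi2 : (2:ℤ) ≤ (i:ℤ) := by exact_mod_cast h2i
    have e : ((m:ℤ)-1) * n = n * ((m:ℤ)-1) := mul_comm _ _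
    rcases hmax _ hbead with h | h
    · linarith
    · have : (0:ℤ) ≤ ((m:ℤ)-1) * n := mul_nonneg (by linarith) hn0.le
      linarith
  · rintro ⟨hb1, hbi⟩
    have hbead : IsBead lam ℓ (((m:ℤ)-1) * n + ((1:ℕ):ℤ)) :=
      (hb 1 (by omega) _).mpr (by omega)
    have hpos' : (0:ℤ) ≤ ((m:ℤ)-1) * n + 1 := by
      have := mul_nonneg (by linarith : (0:ℤ) ≤ (m:ℤ)-1) hn0.le; linarith
    obtain ⟨k, hk, hbk⟩ : ∃ k < ℓ, betaP lam ℓ k = ((m:ℤ)-1) * n + 1 := by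
      rcases hbead with h | h
      · push_cast at h; exact absurd h (by linarith)
      · push_cast at h; exact h
    have hge : ((m:ℤ)-1) * n + 1 ≤ (lam 0:ℤ) + ℓ - 1 := hbk ▸ hbeta_le k
    have hℓ : 1 ≤ ℓ := by omega
    have hbx0 : betaP lam ℓ 0 = (lam 0:ℤ) + ℓ - 1 := by
      simp only [betaP, Nat.cast_zero]; ring
    have hxbead : IsBead lam ℓ ((lam 0:ℤ) + ℓ - 1) := Or.inr ⟨0, hℓ, hbx0⟩
    have hx1 : (1:ℤ) ≤ (lam 0:ℤ) + ℓ - 1 := hbx0 ▸ hbeta_pos 0 hℓ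
    set x : ℤ := (lam 0:ℤ) + ℓ - 1 with hxdef
    have hr0 : 0 ≤ x % (n:ℤ) := Int.emod_nonneg x (by omega)
    have hrn : x % (n:ℤ) < n := Int.emod_lt_of_pos x hn0
    have hxd : (x / (n:ℤ)) * n + x % n = x := by
      have := Int.mul_ediv_add_emod x (n:ℤ); linarith [mul_comm (x / (n:ℤ)) (n:ℤ)]
    set i : ℕ := (x % (n:ℤ)).toNat with hidef
    have hir : (i:ℤ) = x % (n:ℤ) := Int.toNat_of_nonneg hr0
    have hin : i < n := by omega
    have hq : x / (n:ℤ) < (b i : ℤ) := by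
      refine (hb i hin (x / (n:ℤ))).mp ?_
      rw [hir, hxd]; exact hxbead
    rcases Nat.lt_or_ge i 2 with hi2 | hi2
    · interval_cases i
      · exfalso
        rw [hb0] at hq
        have hq1 : x / (n:ℤ) ≤ -1 := by omega
        have : (x / (n:ℤ)) * n ≤ (-1) * n := mul_le_mul_of_nonneg_right hq1 hn0.le
        have hr : x % (n:ℤ) = 0 := by omega
        linarith [hxd, hr]
      · rw [hb1] at hq
        have hq1 : x / (n:ℤ) ≤ (m:ℤ) - 1 := by omega
        have h1 : (x / (n:ℤ)) * n ≤ ((m:ℤ)-1) * n := mul_le_mul_of_nonneg_right hq1 hn0.le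
        have hr : x % (n:ℤ) = 1 := by omega
        have e : ((m:ℤ)-1) * n = n * ((m:ℤ)-1) := mul_comm _ _
        linarith [hxd]
    · exfalso
      have hbm : b i < m := hbi i hi2 hin
      have hq2 : x / (n:ℤ) ≤ (m:ℤ) - 2 := by omega
      have h1 : (x / (n:ℤ)) * n ≤ ((m:ℤ)-2) * n := mul_le_mul_of_nonneg_right hq2 hn0.le
      have e : ((m:ℤ)-2) * n + n = ((m:ℤ)-1) * n := by ring
      linarith [hxd]

end Shi
end

section
/- The number of dominant regions of the m-Shi arrangement of type A_{n−1} that have H_{θ,m} as a separating wall equals m^{n−2}. -/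
open Finset

namespace Shi

/-!
A region with `H_{θ,m}` as separating wall is determined by a generic point `p` of that facet,
that is, by its wall coordinates `a i = ⟨p, e₀ - eᵢ⟩`, with `0 = a 0 < a 1 < ⋯ < a (k + 1) = m`
(`k = n - 2`) and no two of them differing by an integer except `a 0` and `a (k + 1)`. The Shi
tableau of the region is `⌊a (j + 1) - a i⌋`, and `⌊u - v⌋ = ⌊u⌋ - ⌊v⌋ - [fract u < fract v]`
shows that it only depends on the integer parts `⌊a i⌋` and on the relative order of the
fractional parts. Reading the integer parts in the order of increasing fractional part gives a word
in `{0, …, m - 1}ᵏ`, and each word comes from exactly one tableau: give the `r`-th letter the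
fractional part `(r + 1) / (k + 2)` and sort.
-/

section Floor

variable {R : Type*} [CommRing R] [LinearOrder R] [IsStrictOrderedRing R] [FloorRing R]

theorem floor_sub_eq (u v : R) :
    ⌊u - v⌋ = ⌊u⌋ - ⌊v⌋ - if Int.fract u < Int.fract v then 1 else 0 := by
  rw [Int.floor_eq_iff]
  have hu := Int.floor_add_fract u
  have hv := Int.floor_add_fract v
  have := Int.fract_nonneg u
  have := Int.fract_nonneg v
  have := Int.fract_lt_one u
  have := Int.fract_lt_one v
  split_ifs <;> push_cast <;> constructor <;> linarith

theorem lt_iff_floor_lt_or_fract_lt {u v : R} :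
    u < v ↔ ⌊u⌋ < ⌊v⌋ ∨ ⌊u⌋ = ⌊v⌋ ∧ Int.fract u < Int.fract v := by
  have hu := Int.floor_add_fract u
  have hv := Int.floor_add_fract v
  constructor
  · intro h
    rcases (Int.floor_le_floor h.le).lt_or_eq with hlt | heq
    · exact .inl hlt
    · refine .inr ⟨heq, ?_⟩
      rw [heq] at hu
      linarith
  · rintro (hlt | ⟨heq, hlt⟩)
    · have : (⌊u⌋ : R) + 1 ≤ ⌊v⌋ := by exact_mod_cast hlt
      linarith [Int.fract_lt_one u, Int.fract_nonneg v]
    · rw [heq] at hu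
      linarith

end Floor

theorem floor_eq_floor_of_intCast_le_iff {R : Type*} [Ring R] [LinearOrder R] [FloorRing R]
    {u v : R} {n : ℤ} (hu : 0 ≤ u) (hv : 0 ≤ v) (hvn : v < n)
    (h : ∀ t : ℤ, 0 < t → t ≤ n → ((t : R) ≤ u ↔ (t : R) ≤ v)) :
    ⌊u⌋ = ⌊v⌋ := by
  have hv0 : 0 ≤ ⌊v⌋ := Int.floor_nonneg.2 hv
  have hvn' : ⌊v⌋ < n := Int.floor_lt.2 hvn
  apply le_antisymm
  · by_contra! hlt
    have := (h (⌊v⌋ + 1) (by omega) (by omega)).1 (Int.le_floor.1 hlt)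
    have := Int.le_floor.2 this
    omega
  · rcases hv0.eq_or_lt with h0 | hpos
    · rw [← h0]
      exact Int.floor_nonneg.2 hu
    · exact Int.le_floor.2 ((h _ hpos hvn'.le).2 (Int.floor_le v))

theorem exists_pos_add_lt_floor_add_one {ι : Type*} [Finite ι] (u : ι → ℝ) :
    ∃ ε > 0, ∀ i, u i + ε < ⌊u i⌋ + 1 := by
  have h : ∀ i, ∀ᶠ ε in nhds (0 : ℝ), u i + ε < ⌊u i⌋ + 1 := fun i =>
    Filter.Tendsto.eventually_lt_const (by simp [Int.lt_floor_add_one])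
      (tendsto_const_nhds.add Filter.tendsto_id)
  obtain ⟨ε, hε, hpos⟩ :=
    ((Filter.eventually_all.2 h).filter_mono nhdsWithin_le_nhds |>.and
      (self_mem_nhdsWithin (s := Set.Ioi 0))).exists
  exact ⟨ε, hpos, hε⟩

theorem perm_eq_of_inversion_iff {n : ℕ} {σ τ : Equiv.Perm (Fin n)}
    (h : ∀ s t, s < t → (σ t < σ s ↔ τ t < τ s)) : σ = τ := by
  have hmono : Monotone (τ * σ⁻¹) := by
    intro u v huv
    obtain ⟨s, rfl⟩ := σ.surjective u
    obtain ⟨t, rfl⟩ := σ.surjective v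
    simp only [Equiv.Perm.coe_mul, Function.comp_apply, Equiv.Perm.inv_def, Equiv.symm_apply_apply]
    rcases lt_trichotomy s t with hst | rfl | hst
    · exact not_lt.1 fun hτ => not_lt.2 huv ((h s t hst).2 hτ)
    · rfl
    · exact ((h t s hst).1 (huv.lt_of_ne (σ.injective.ne hst.ne'))).le
  exact (mul_inv_eq_one.1 ((Equiv.Perm.monotone_iff _).1 hmono)).symm

section WallCoord

variable {k m : ℕ}

def wallCoord (p : ℕ → ℝ) (i : ℕ) : ℝ := p 0 - p i

theorem inn_eq_wallCoord_sub (p : ℕ → ℝ) (i j : ℕ) :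
    inn p i j = wallCoord p (j + 1) - wallCoord p i := by
  simp only [inn, wallCoord]
  ring

/-- `a i = ⟨p, e₀ - eᵢ⟩` are the wall coordinates of a point `p` of `H_{θ,m}` (`θ = α_{0k}`,
`n = k + 2`) lying in the dominant chamber and on no other hyperplane of the `m`-Shi
arrangement. -/
structure IsWallCoord (k m : ℕ) (a : ℕ → ℝ) : Prop where
  zero : a 0 = 0
  top : a (k + 1) = m
  lt : ∀ i j, i < j → j ≤ k + 1 → ¬(i = 0 ∧ j = k + 1) → a i < a j
  fract_ne : ∀ i j, i < j → j ≤ k + 1 → ¬(i = 0 ∧ j = k + 1) →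
    Int.fract (a i) ≠ Int.fract (a j)

theorem sub_lt_of_increasing {a : ℕ → ℝ} (h0 : a 0 = 0) (htop : a (k + 1) = m)
    (hlt : ∀ i j, i < j → j ≤ k + 1 → ¬(i = 0 ∧ j = k + 1) → a i < a j)
    {i j : ℕ} (hij : i < j) (hj : j ≤ k + 1) (hθ : ¬(i = 0 ∧ j = k + 1)) :
    a j - a i < m := by
  rcases Nat.eq_zero_or_pos i with rfl | hi
  · linarith [hlt j (k + 1) (by omega) le_rfl (by omega)]
  rcases hj.lt_or_eq with hj | rfl
  · linarith [hlt j (k + 1) hj le_rfl (by omega), hlt 0 i hi (by omega) (by omega)]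
  · linarith [hlt 0 i hi (by omega) (by omega)]

theorem IsWallCoord.sub_lt {a : ℕ → ℝ} (ha : IsWallCoord k m a) {i j : ℕ} (hij : i < j)
    (hj : j ≤ k + 1) (hθ : ¬(i = 0 ∧ j = k + 1)) : a j - a i < m :=
  sub_lt_of_increasing ha.zero ha.top ha.lt hij hj hθ

theorem IsWallCoord.sub_pos {a : ℕ → ℝ} (ha : IsWallCoord k m a) (hm : 1 ≤ m) {i j : ℕ}
    (hij : i < j) (hj : j ≤ k + 1) : 0 < a j - a i := by
  by_cases hij0 : i = 0 ∧ j = k + 1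
  · rw [hij0.1, hij0.2, ha.zero, ha.top, sub_zero]
    exact_mod_cast hm
  · exact _root_.sub_pos.2 (ha.lt i j hij hj hij0)

theorem IsWallCoord.sub_le {a : ℕ → ℝ} (ha : IsWallCoord k m a) {i j : ℕ} (hij : i < j)
    (hj : j ≤ k + 1) : a j - a i ≤ m := by
  by_cases hij0 : i = 0 ∧ j = k + 1
  · rw [hij0.1, hij0.2, ha.zero, ha.top, sub_zero]
  · exact (ha.sub_lt hij hj hij0).le

theorem IsWallCoord.sub_ne_intCast {a : ℕ → ℝ} (ha : IsWallCoord k m a) {i j : ℕ}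
    (hij : i < j) (hj : j ≤ k + 1) (hθ : ¬(i = 0 ∧ j = k + 1)) (t : ℤ) : a j - a i ≠ t :=
  fun h => ha.fract_ne i j hij hj hθ (Int.fract_eq_fract.2 ⟨-t, by push_cast; linarith⟩)

theorem IsWallCoord.fract_pos {a : ℕ → ℝ} (ha : IsWallCoord k m a) (t : Fin k) :
    0 < Int.fract (a (t + 1)) :=
  (Int.fract_nonneg _).lt_of_ne <| by
    simpa [ha.zero] using ha.fract_ne 0 (t + 1) (by omega) (by omega) (by omega)

theorem wallIndex_cases {i : ℕ} (hi : i ≤ k + 1) :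
    i = 0 ∨ i = k + 1 ∨ ∃ t : Fin k, i = t + 1 := by
  rcases Nat.eq_zero_or_pos i with h | h
  · exact .inl h
  rcases hi.lt_or_eq with h' | h'
  · exact .inr (.inr ⟨⟨i - 1, by omega⟩, by simp; omega⟩)
  · exact .inr (.inl h')

theorem forall_wallPair {P : ℕ → ℕ → Prop} (h0 : ∀ t : Fin k, P 0 (t + 1))
    (htop : ∀ s : Fin k, P (s + 1) (k + 1)) (hmid : ∀ s t : Fin k, s < t → P (s + 1) (t + 1)) :
    ∀ i j, i < j → j ≤ k + 1 → ¬(i = 0 ∧ j = k + 1) → P i j := by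
  intro i j hij hj hθ
  rcases wallIndex_cases (k := k) (i := i) (by omega) with rfl | rfl | ⟨s, rfl⟩
  · obtain ⟨t, rfl⟩ := ((wallIndex_cases hj).resolve_left (by omega)).resolve_left (by omega)
    exact h0 t
  · omega
  · rcases wallIndex_cases hj with rfl | rfl | ⟨t, rfl⟩
    · omega
    · exact htop s
    · exact hmid s t (by omega)

/-- The Shi tableau `⌊⟨p, α_{ij}⟩⌋` of a point `p` with wall coordinates `a`. -/
noncomputable def coordTab (k : ℕ) (a : ℕ → ℝ) (i j : ℕ) : ℤ :=
  if i ≤ j ∧ j ≤ k then ⌊a (j + 1) - a i⌋ else 0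

theorem coordTab_of_le {k i j : ℕ} (a : ℕ → ℝ) (hij : i ≤ j) (hj : j ≤ k) :
    coordTab k a i j = ⌊a (j + 1) - a i⌋ :=
  if_pos ⟨hij, hj⟩

theorem coordTab_congr {a a' : ℕ → ℝ} (ha : IsWallCoord k m a) (ha' : IsWallCoord k m a')
    (hfloor : ∀ t : Fin k, ⌊a (t + 1)⌋ = ⌊a' (t + 1)⌋)
    (hfract : ∀ s t : Fin k, Int.fract (a (s + 1)) < Int.fract (a (t + 1)) ↔
      Int.fract (a' (s + 1)) < Int.fract (a' (t + 1))) :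
    coordTab k a = coordTab k a' := by
  have hfloor' : ∀ i, i ≤ k + 1 → ⌊a i⌋ = ⌊a' i⌋ := by
    intro i hi
    rcases wallIndex_cases hi with rfl | rfl | ⟨t, rfl⟩
    · simp [ha.zero, ha'.zero]
    · simp [ha.top, ha'.top]
    · exact hfloor t
  have hfract' : ∀ i j, i ≤ k + 1 → j ≤ k + 1 →
      (Int.fract (a i) < Int.fract (a j) ↔ Int.fract (a' i) < Int.fract (a' j)) := by
    intro i j hi hj
    rcases wallIndex_cases hi with rfl | rfl | ⟨s, rfl⟩ <;>
    rcases wallIndex_cases hj with rfl | rfl | ⟨t, rfl⟩ <;>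
    simp [ha.zero, ha.top, ha'.zero, ha'.top, ha.fract_pos, ha'.fract_pos, hfract,
      fun x : ℝ => not_lt.2 (Int.fract_nonneg x)]
  funext i j
  by_cases hij : i ≤ j ∧ j ≤ k
  · rw [coordTab_of_le _ hij.1 hij.2, coordTab_of_le _ hij.1 hij.2, floor_sub_eq, floor_sub_eq,
      hfloor' _ (by omega), hfloor' _ (by omega)]
    simp only [hfract' _ _ (by omega : j + 1 ≤ k + 1) (by omega : i ≤ k + 1)]
  · simp only [coordTab, if_neg hij]

end WallCoord

section Geometry

variable {k m : ℕ}

theorem isWallCoord_wallCoord {p : ℕ → ℝ} (hθ : inn p 0 k = m)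
    (hpos : ∀ i j, i ≤ j → j ≤ k → ¬(i = 0 ∧ j = k) → 0 < inn p i j)
    (hne : ∀ i j, i ≤ j → j ≤ k → ¬(i = 0 ∧ j = k) → ∀ t : ℤ, -(m : ℤ) < t → t ≤ m →
      inn p i j ≠ t) :
    IsWallCoord k m (wallCoord p) := by
  have hlt : ∀ i j, i < j → j ≤ k + 1 → ¬(i = 0 ∧ j = k + 1) → wallCoord p i < wallCoord p j := by
    intro i j hij hj hij0
    have := hpos i (j - 1) (by omega) (by omega) (by omega)
    rw [inn_eq_wallCoord_sub, Nat.sub_add_cancel (by omega)] at this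
    linarith
  refine ⟨sub_self _, hθ, hlt, fun i j hij hj hij0 h => ?_⟩
  obtain ⟨t, ht⟩ := Int.fract_eq_fract.1 h.symm
  have hinn : inn p i (j - 1) = t := by
    rw [inn_eq_wallCoord_sub, Nat.sub_add_cancel (by omega), ht]
  have h0 : (0 : ℝ) < t := hinn ▸ hpos i (j - 1) (by omega) (by omega) (by omega)
  have hm : (t : ℝ) < m := ht ▸ sub_lt_of_increasing (sub_self _) hθ hlt hij hj hij0
  exact hne i (j - 1) (by omega) (by omega) (by omega) t
    (by have := Int.cast_pos.1 h0; omega) (by exact_mod_cast hm.le) hinn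

theorem exists_isWallCoord_of_sepWall (hm : 1 ≤ m) {x : ℕ → ℝ} {e : ℕ → ℕ → ℤ}
    (hx : RegionPoint (k + 2) m x) (he : TabOf (k + 2) m x e) (hw : SepWall (k + 2) m x 0 k) :
    ∃ p, IsWallCoord k m (wallCoord p) ∧ ∀ i j, i ≤ j → j ≤ k → e i j = ⌊inn p i j⌋ := by
  obtain ⟨hxθ, p, ⟨-, hcl⟩, hpθ, hgen⟩ := hw
  have hp_ne : ∀ i j, i ≤ j → j ≤ k → ¬(i = 0 ∧ j = k) → ∀ t : ℤ, -(m : ℤ) < t → t ≤ m →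
      inn p i j ≠ t := fun i j hij hj hij0 t ht ht' =>
    hgen i j hij (by omega) t ht ht' fun h => hij0 ⟨h.1, h.2.1⟩
  -- off `H_{θ,m}`, the facet point `p` lies on the same side as `x` of every hyperplane
  have hside : ∀ i j, i ≤ j → j ≤ k → ¬(i = 0 ∧ j = k) → ∀ t : ℤ, -(m : ℤ) < t → t ≤ m →
      ((t : ℝ) ≤ inn x i j ↔ (t : ℝ) ≤ inn p i j) := by
    intro i j hij hj hij0 t ht ht'
    have hxt := hx.2.2 i j hij (by omega) t ht ht'
    have hcl := hcl i j hij (by omega) t ht ht'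
    constructor
    · exact fun h => hcl.1 (h.lt_of_ne' hxt)
    · intro h
      by_contra! hlt
      exact hp_ne i j hij hj hij0 t ht ht' (le_antisymm (hcl.2 hlt) h)
  have hpos : ∀ i j, i ≤ j → j ≤ k → ¬(i = 0 ∧ j = k) → 0 < inn p i j := by
    intro i j hij hj hij0
    have h := (hside i j hij hj hij0 0 (by omega) (by omega)).1
      (by simpa using (hx.2.1 i j hij (by omega)).le)
    exact_mod_cast h.lt_of_ne' (hp_ne i j hij hj hij0 0 (by omega) (by omega))
  have hwall := isWallCoord_wallCoord hpθ hpos hp_ne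
  refine ⟨p, hwall, fun i j hij hj => ?_⟩
  rw [he i j hij (by omega)]
  by_cases hij0 : i = 0 ∧ j = k
  · obtain ⟨rfl, rfl⟩ := hij0
    rw [hpθ, Int.floor_natCast]
    exact min_eq_right (Int.le_floor.2 (by exact_mod_cast hxθ.le))
  have hlt : inn p i j < m := by
    rw [inn_eq_wallCoord_sub]
    exact hwall.sub_lt (by omega) (by omega) (by omega)
  rw [floor_eq_floor_of_intCast_le_iff (hx.2.1 i j hij (by omega)).le (hpos i j hij hj hij0).le
    (by exact_mod_cast hlt) fun t ht ht' => hside i j hij hj hij0 t (by omega) ht']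
  exact min_eq_left (Int.floor_lt.2 (by exact_mod_cast hlt)).le

noncomputable def pointOfWallCoord (n : ℕ) (a : ℕ → ℝ) (i : ℕ) : ℝ :=
  (∑ t ∈ range n, a t) / n - a i

theorem sumZero_pointOfWallCoord {n : ℕ} (hn : n ≠ 0) (a : ℕ → ℝ) :
    SumZero n (pointOfWallCoord n a) := by
  simp only [SumZero, pointOfWallCoord, sum_sub_distrib, sum_const, card_range, nsmul_eq_mul]
  field_simp
  ring

theorem wallCoord_pointOfWallCoord {n : ℕ} {a : ℕ → ℝ} (h0 : a 0 = 0) :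
    wallCoord (pointOfWallCoord n a) = a := by
  ext i
  simp [wallCoord, pointOfWallCoord, h0]

theorem exists_nudge {p : ℕ → ℝ} (hp : SumZero (k + 2) p) :
    ∃ x, SumZero (k + 2) x ∧ inn p 0 k < inn x 0 k ∧
      ∀ i j, i ≤ j → j ≤ k → inn p i j ≤ inn x i j ∧ ⌊inn x i j⌋ = ⌊inn p i j⌋ := by
  obtain ⟨ε, hε, hε_lt⟩ :=
    exists_pos_add_lt_floor_add_one fun ij : Fin (k + 1) × Fin (k + 1) => inn p ij.1 ij.2
  set x : ℕ → ℝ := fun i => p i + (if i = 0 then ε / 2 else 0) - (if i = k + 1 then ε / 2 else 0)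
  have hinn : ∀ i j, i ≤ j → j ≤ k →
      inn x i j = inn p i j + (if i = 0 then ε / 2 else 0) + (if j = k then ε / 2 else 0) := by
    intro i j hij hj
    simp only [x, inn, if_neg (show i ≠ k + 1 by omega), if_neg (show j + 1 ≠ 0 by omega),
      Nat.add_right_cancel_iff]
    ring
  refine ⟨x, ?_, ?_, fun i j hij hj => ?_⟩
  · simp only [SumZero, x, sum_sub_distrib, sum_add_distrib, sum_ite_eq', mem_range]
    rw [hp, if_pos (by omega), if_pos (by omega)]
    ring
  · rw [hinn 0 k k.zero_le le_rfl, if_pos rfl, if_pos rfl]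
    linarith
  · have := hε_lt (⟨i, by omega⟩, ⟨j, by omega⟩)
    have hle : inn p i j ≤ inn x i j := by
      rw [hinn i j hij hj]
      split_ifs <;> linarith
    refine ⟨hle, Int.floor_eq_iff.2 ⟨(Int.floor_le _).trans hle, ?_⟩⟩
    rw [hinn i j hij hj]
    split_ifs <;> linarith

theorem exists_sepWall_of_isWallCoord (hm : 1 ≤ m) {p : ℕ → ℝ} (hp : SumZero (k + 2) p)
    (ha : IsWallCoord k m (wallCoord p)) :
    ∃ x, RegionPoint (k + 2) m x ∧ TabOf (k + 2) m x (coordTab k (wallCoord p)) ∧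
      SepWall (k + 2) m x 0 k := by
  have hθ : inn p 0 k = m := by rw [inn_eq_wallCoord_sub, ha.top, ha.zero, sub_zero]
  have hpos : ∀ i j, i ≤ j → j ≤ k → 0 < inn p i j := fun i j hij hj => by
    rw [inn_eq_wallCoord_sub]
    exact ha.sub_pos hm (by omega) (by omega)
  have hle : ∀ i j, i ≤ j → j ≤ k → inn p i j ≤ m := fun i j hij hj => by
    rw [inn_eq_wallCoord_sub]
    exact ha.sub_le (by omega) (by omega)
  have hne : ∀ i j, i ≤ j → j ≤ k → ¬(i = 0 ∧ j = k) → ∀ t : ℤ, inn p i j ≠ t :=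
    fun i j hij hj hij0 => by
      rw [inn_eq_wallCoord_sub]
      exact ha.sub_ne_intCast (by omega) (by omega) (by omega)
  obtain ⟨x, hxsum, hxθ, hx⟩ := exists_nudge hp
  have hfloor : ∀ i j, i ≤ j → j ≤ k → ⌊inn x i j⌋ = ⌊inn p i j⌋ := fun i j hij hj =>
    (hx i j hij hj).2
  have hx_ne : ∀ i j, i ≤ j → j ≤ k → ¬(i = 0 ∧ j = k) → ∀ t : ℤ, inn x i j ≠ t := by
    intro i j hij hj hij0 t h
    have ht : ⌊inn p i j⌋ = t := by rw [← hfloor i j hij hj, h, Int.floor_intCast]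
    refine hne i j hij hj hij0 t (le_antisymm ?_ ?_)
    · exact h ▸ (hx i j hij hj).1
    · exact ht ▸ Int.floor_le _
  refine ⟨x, ⟨hxsum, fun i j hij hj => ?_, fun i j hij hj t ht ht' => ?_⟩, fun i j hij hj => ?_,
    hθ ▸ hxθ, p, ⟨hp, fun i j hij hj t ht ht' => ⟨fun h => ?_, fun h => ?_⟩⟩, hθ,
    fun i j hij hj t ht ht' hij0 => ?_⟩
  · exact (hpos i j hij (by omega)).trans_le (hx i j hij (by omega)).1
  · by_cases hij0 : i = 0 ∧ j = k
    · rw [hij0.1, hij0.2]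
      have : (t : ℝ) ≤ m := by exact_mod_cast ht'
      exact (this.trans_lt (hθ ▸ hxθ)).ne'
    · exact hx_ne i j hij (by omega) hij0 t
  · rw [coordTab_of_le _ hij (by omega), ← inn_eq_wallCoord_sub, hfloor i j hij (by omega)]
    refine (min_eq_left ?_).symm
    exact Int.floor_le_floor (hle i j hij (by omega)) |>.trans (Int.floor_natCast m).le
  · have := Int.le_floor.2 h.le
    rw [hfloor i j hij (by omega)] at this
    exact (Int.cast_le.2 this).trans (Int.floor_le _)
  · exact (hx i j hij (by omega)).1.trans h.le
  · by_cases hij0' : i = 0 ∧ j = k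
    · rw [hij0'.1, hij0'.2, hθ]
      exact fun h => hij0 ⟨hij0'.1, hij0'.2, by exact_mod_cast h.symm⟩
    · exact hne i j hij (by omega) hij0' t

theorem sepWall_theta_iff (hm : 1 ≤ m) (e : ℕ → ℕ → ℤ) :
    (Normalized (k + 2) e ∧
      ∃ x, RegionPoint (k + 2) m x ∧ TabOf (k + 2) m x e ∧ SepWall (k + 2) m x 0 k) ↔
    ∃ a, IsWallCoord k m a ∧ coordTab k a = e := by
  constructor
  · rintro ⟨hnorm, x, hx, he, hw⟩
    obtain ⟨p, hp, hep⟩ := exists_isWallCoord_of_sepWall hm hx he hw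
    refine ⟨wallCoord p, hp, funext₂ fun i j => ?_⟩
    by_cases hij : i ≤ j ∧ j ≤ k
    · rw [coordTab_of_le _ hij.1 hij.2, hep i j hij.1 hij.2, inn_eq_wallCoord_sub]
    · rw [coordTab, if_neg hij, hnorm i j (by omega)]
  · rintro ⟨a, ha, rfl⟩
    refine ⟨fun i j hij => if_neg (by omega), ?_⟩
    have hp := wallCoord_pointOfWallCoord (n := k + 2) ha.zero
    rw [← hp] at ha ⊢
    exact exists_sepWall_of_isWallCoord hm (sumZero_pointOfWallCoord (by omega) a) ha

end Geometry

section Words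

variable {k m : ℕ}

noncomputable def rankFract (k : ℕ) (r : Fin k) : ℝ := ((r : ℕ) + 1) / (k + 2)

theorem rankFract_pos (r : Fin k) : 0 < rankFract k r := by
  unfold rankFract
  positivity

theorem rankFract_lt_one (r : Fin k) : rankFract k r < 1 := by
  rw [rankFract, div_lt_one (by positivity)]
  have : (r : ℝ) + 1 ≤ k := by exact_mod_cast r.isLt
  linarith

theorem rankFract_strictMono : StrictMono (rankFract k) := fun r s h => by
  unfold rankFract
  gcongr
  exact_mod_cast h

/-- Position `t` of the stably sorted word `b` gets the letter `b (σ t)` as integer part and that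
letter's original place `σ t`, through `rankFract`, as fractional part (`σ = Tuple.sort b`). -/
noncomputable def wordCoord (b : Fin k → Fin m) (i : ℕ) : ℝ :=
  if h : i = 0 then 0
  else if h' : i ≤ k then
    (b (Tuple.sort b ⟨i - 1, by omega⟩) : ℝ) + rankFract k (Tuple.sort b ⟨i - 1, by omega⟩)
  else m

theorem wordCoord_zero (b : Fin k → Fin m) : wordCoord b 0 = 0 := rfl

theorem wordCoord_top (b : Fin k → Fin m) : wordCoord b (k + 1) = m := by
  simp [wordCoord]

theorem wordCoord_succ (b : Fin k → Fin m) (t : Fin k) :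
    wordCoord b (t + 1) = (b (Tuple.sort b t) : ℝ) + rankFract k (Tuple.sort b t) := by
  simp [wordCoord, t.isLt]

theorem floor_wordCoord_succ (b : Fin k → Fin m) (t : Fin k) :
    ⌊wordCoord b (t + 1)⌋ = (b (Tuple.sort b t) : ℕ) := by
  rw [wordCoord_succ, Int.floor_natCast_add, Int.floor_eq_zero_iff.2
    ⟨(rankFract_pos _).le, rankFract_lt_one _⟩, add_zero]

theorem fract_wordCoord_succ (b : Fin k → Fin m) (t : Fin k) :
    Int.fract (wordCoord b (t + 1)) = rankFract k (Tuple.sort b t) := by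
  rw [wordCoord_succ, Int.fract_natCast_add,
    Int.fract_eq_self.2 ⟨(rankFract_pos _).le, rankFract_lt_one _⟩]

theorem fract_wordCoord_lt_iff (b : Fin k → Fin m) (s t : Fin k) :
    Int.fract (wordCoord b (s + 1)) < Int.fract (wordCoord b (t + 1)) ↔
      Tuple.sort b s < Tuple.sort b t := by
  rw [fract_wordCoord_succ, fract_wordCoord_succ, rankFract_strictMono.lt_iff_lt]

theorem isWallCoord_wordCoord (b : Fin k → Fin m) : IsWallCoord k m (wordCoord b) := by
  have hnat : ∀ t : Fin k, ((b (Tuple.sort b t) : ℕ) : ℝ) + 1 ≤ m := fun t => by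
    exact_mod_cast (b (Tuple.sort b t)).isLt
  refine ⟨wordCoord_zero b, wordCoord_top b, forall_wallPair (fun t => ?_) (fun s => ?_)
    (fun s t hst => ?_), forall_wallPair (fun t => ?_) (fun s => ?_) (fun s t hst => ?_)⟩
  · rw [wordCoord_zero, wordCoord_succ]
    exact add_pos_of_nonneg_of_pos (Nat.cast_nonneg _) (rankFract_pos _)
  · rw [wordCoord_top, wordCoord_succ]
    linarith [rankFract_lt_one (Tuple.sort b s), hnat s]
  · refine lt_iff_floor_lt_or_fract_lt.2 ?_
    rw [floor_wordCoord_succ, floor_wordCoord_succ, fract_wordCoord_lt_iff, Nat.cast_lt,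
      Nat.cast_inj, ← Fin.lt_def, ← Fin.ext_iff]
    rcases (Tuple.monotone_sort b hst.le).lt_or_eq with hlt | heq
    · exact .inl hlt
    · exact .inr ⟨heq, (Tuple.eq_sort_iff.1 rfl).2 s t hst heq⟩
  · rw [wordCoord_zero, fract_wordCoord_succ, Int.fract_zero]
    exact (rankFract_pos _).ne
  · rw [wordCoord_top, fract_wordCoord_succ, Int.fract_natCast]
    exact (rankFract_pos _).ne'
  · rw [fract_wordCoord_succ, fract_wordCoord_succ]
    exact rankFract_strictMono.injective.ne ((Tuple.sort b).injective.ne hst.ne)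

theorem coordTab_wordCoord_injective :
    Function.Injective fun b : Fin k → Fin m => coordTab k (wordCoord b) := by
  intro b b' h
  simp only at h
  have hval : ∀ t : Fin k, b (Tuple.sort b t) = b' (Tuple.sort b' t) := fun t => by
    have := congrFun₂ h 0 t
    rw [coordTab_of_le _ t.val.zero_le t.isLt.le, coordTab_of_le _ t.val.zero_le t.isLt.le,
      wordCoord_zero, wordCoord_zero, sub_zero, sub_zero, floor_wordCoord_succ,
      floor_wordCoord_succ, Nat.cast_inj] at this
    exact Fin.ext this
  have hinv : ∀ s t : Fin k, s < t →
      (Tuple.sort b t < Tuple.sort b s ↔ Tuple.sort b' t < Tuple.sort b' s) := by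
    intro s t hst
    have := congrFun₂ h (s + 1) t
    rw [coordTab_of_le _ hst t.isLt.le, coordTab_of_le _ hst t.isLt.le, floor_sub_eq,
      floor_sub_eq, floor_wordCoord_succ, floor_wordCoord_succ, floor_wordCoord_succ,
      floor_wordCoord_succ, hval s, hval t] at this
    simp only [fract_wordCoord_lt_iff] at this
    split_ifs at this with h1 h2 h2
    · exact iff_of_true h1 h2
    · omega
    · omega
    · exact iff_of_false h1 h2
  have hσ := perm_eq_of_inversion_iff hinv
  funext r
  obtain ⟨t, rfl⟩ := (Tuple.sort b).surjective r
  rw [hval t, hσ]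

theorem exists_coordTab_wordCoord_eq {a : ℕ → ℝ} (ha : IsWallCoord k m a) :
    ∃ b : Fin k → Fin m, coordTab k (wordCoord b) = coordTab k a := by
  set c : Fin k → ℝ := fun t => a (t + 1)
  have hc : StrictMono c := fun s t hst => ha.lt (s + 1) (t + 1) (by simpa) (by omega) (by omega)
  have hinj : Function.Injective fun t => Int.fract (c t) := by
    intro s t h
    by_contra hst
    rcases lt_or_gt_of_ne hst with hst | hst
    · exact ha.fract_ne (s + 1) (t + 1) (by simpa) (by omega) (by omega) h
    · exact ha.fract_ne (t + 1) (s + 1) (by simpa) (by omega) (by omega) h.symm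
  -- `ρ⁻¹ t` is the rank of the fractional part of `c t`
  set ρ := Tuple.sort fun t => Int.fract (c t)
  have hρ : StrictMono ((fun t => Int.fract (c t)) ∘ ρ) :=
    (Tuple.monotone_sort _).strictMono_of_injective (hinj.comp ρ.injective)
  have hfloor_nonneg : ∀ t, 0 ≤ ⌊c t⌋ := fun t =>
    Int.floor_nonneg.2 (ha.zero ▸ (ha.lt 0 (t + 1) (by omega) (by omega) (by omega)).le)
  have hfloor_lt : ∀ t, ⌊c t⌋.toNat < m := fun t => by
    have h : c t < m := ha.top ▸ ha.lt (t + 1) (k + 1) (by omega) le_rfl (by omega)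
    have := Int.floor_lt.2 (by exact_mod_cast h : c t < ((m : ℤ) : ℝ))
    have := hfloor_nonneg t
    omega
  set b : Fin k → Fin m := fun r => ⟨⌊c (ρ r)⌋.toNat, hfloor_lt _⟩
  have hb : ∀ t, (b (ρ⁻¹ t) : ℤ) = ⌊c t⌋ := fun t => by
    simp [b, Equiv.Perm.inv_def, hfloor_nonneg]
  have hsort : Tuple.sort b = ρ⁻¹ := by
    refine (Tuple.eq_sort_iff.2 ⟨fun s t hst => ?_, fun s t hst heq => ?_⟩).symm
    · simp only [Function.comp_apply, Fin.le_def, ← Int.ofNat_le, hb]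
      exact Int.floor_le_floor (hc.monotone hst)
    · have heq : ⌊c s⌋ = ⌊c t⌋ := by rw [← hb, ← hb, heq]
      have := ((lt_iff_floor_lt_or_fract_lt.1 (hc hst)).resolve_left heq.not_lt).2
      rw [← hρ.lt_iff_lt]
      simpa [Equiv.Perm.inv_def] using this
  refine ⟨b, coordTab_congr (isWallCoord_wordCoord b) ha (fun t => ?_) (fun s t => ?_)⟩
  · rw [floor_wordCoord_succ, hsort, hb]
  · rw [fract_wordCoord_lt_iff, hsort, ← hρ.lt_iff_lt]
    simp [Equiv.Perm.inv_def, c]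

end Words

/-- there are exactly `m^(n-2)` dominant regions of the `m`-Shi arrangement
of type `A_{n-1}` having `H_{θ,m}` as a separating wall (regions are identified with their
normalized Shi tableaux). -/
theorem count_theta_sepwall (n m : ℕ) (hn : 2 ≤ n) (hm : 1 ≤ m) :
    Nat.card {e : ℕ → ℕ → ℤ // Normalized n e ∧
      ∃ x, RegionPoint n m x ∧ TabOf n m x e ∧ SepWall n m x 0 (n - 2)} =
    m ^ (n - 2) := by
  obtain ⟨k, rfl⟩ : ∃ k, n = k + 2 := ⟨n - 2, by omega⟩
  simp only [Nat.add_sub_cancel]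
  have hS : ∀ e, (Normalized (k + 2) e ∧
      ∃ x, RegionPoint (k + 2) m x ∧ TabOf (k + 2) m x e ∧ SepWall (k + 2) m x 0 k) ↔
      e ∈ Set.range fun b : Fin k → Fin m => coordTab k (wordCoord b) := by
    intro e
    rw [sepWall_theta_iff hm]
    constructor
    · rintro ⟨a, ha, rfl⟩
      exact exists_coordTab_wordCoord_eq ha
    · rintro ⟨b, rfl⟩
      exact ⟨_, isWallCoord_wordCoord b, rfl⟩
  rw [Nat.card_congr (Equiv.subtypeEquivRight hS),
    Nat.card_range_of_injective coordTab_wordCoord_injective]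
  simp

end Shi
end
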